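/- arXiv:2009.02885 — 7 statements merged into one kernel-verified Lean document; each statement's English description precedes it below -/
import Mathlib

section
/- In a geodetic graph, if u_0, u_1, ..., u_n and u_0, u'_1, ..., u'_n are two geodesics of the same length n starting at the same vertex u_0, with u_1 ≠ u'_1, and the endpoints u_n and u'_n are adjacent, then the closed path u_0, u_1, ..., u_n, u'_n, ..., u'_1, u_0 is an isometrically embedded circuit (of length 2n+1). -/
/-- A graph is geodetic if between any two vertices there is a unique shortest walk
(equivalently, a unique shortest path). -/
def IsGeodetic {V : Type*} (G : SimpleGraph V) : Prop :=
  ∀ u v : V, ∃! p : G.Walk u v, ∀ q : G.Walk u v, p.length ≤ q.length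

/-- `c : ZMod n → V` is an embedded circuit of length `n`: the vertices are distinct and
cyclically consecutive vertices are adjacent. -/
def IsEmbCircuit {V : Type*} (G : SimpleGraph V) (n : ℕ) (c : ZMod n → V) : Prop :=
  2 ≤ n ∧ Function.Injective c ∧ ∀ i : ZMod n, G.Adj (c i) (c (i + 1))

/-- An embedded circuit is isometrically embedded if the graph distance between any two of its
vertices equals the cyclic distance `min {j-i, n+i-j}` along the circuit. -/
def IsIEC {V : Type*} (G : SimpleGraph V) (n : ℕ) (c : ZMod n → V) : Prop :=
  IsEmbCircuit G n c ∧ ∀ i j : ZMod n, G.dist (c i) (c j) = min (j - i).val (i - j).val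

/-!
Index the circuit by `c : ZMod (2 * n + 1) → V` and say that it splits geodesically at `k` if the
two arcs of length `n` from `c k` to the ends `c (k + n)`, `c (k - n)` of the opposite edge are
geodesics leaving `c k` through different neighbours; the hypotheses say this for `k = 0`.
If it holds at `k`, then `c (k + i)` is at distance exactly `n + 1 - i` from `c (k - n)` for
`1 ≤ i ≤ n`: one step less would produce a second geodesic from `c k` to `c (k - n)`, through
`c (k + 1)` instead of `c (k - 1)`. Together with the same argument from `c (k + 1)`, this moves
the splitting from `k` to `k + 1`, so it holds at every vertex, and the distances it yields are
the cyclic ones.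
-/

open SimpleGraph

section

variable {V : Type*} {G : SimpleGraph V}

theorem IsGeodetic.eq_of_dist_add_dist_le (hG : IsGeodetic G) {u v v' w : V}
    (hv : G.Reachable u v) (hv' : G.Reachable u v') (hw : G.Reachable u w)
    (h : G.dist u v + G.dist v w ≤ G.dist u w) (h' : G.dist u v' + G.dist v' w ≤ G.dist u w)
    (hd : G.dist u v = G.dist u v') : v = v' := by
  obtain ⟨a, ha⟩ := hv.exists_walk_length_eq_dist
  obtain ⟨b, hb⟩ := (hv.symm.trans hw).exists_walk_length_eq_dist
  obtain ⟨a', ha'⟩ := hv'.exists_walk_length_eq_dist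
  obtain ⟨b', hb'⟩ := (hv'.symm.trans hw).exists_walk_length_eq_dist
  have shortest (r : G.Walk u w) (hr : r.length ≤ G.dist u w) (r' : G.Walk u w) :
      r.length ≤ r'.length :=
    hr.trans (dist_le r')
  obtain ⟨_, -, huniq⟩ := hG u w
  have heq : a.append b = a'.append b' :=
    (huniq _ (shortest _ (by simpa [ha, hb]))).trans
      (huniq _ (shortest _ (by simpa [ha', hb']))).symm
  calc v = (a.append b).getVert a.length := by simp [Walk.getVert_append']
    _ = (a'.append b').getVert a'.length := by rw [heq, ha, ha', hd]
    _ = v' := by simp [Walk.getVert_append']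

theorem SimpleGraph.Walk.length_eq_dist_of_forall_length_le {u v : V} (p : G.Walk u v)
    (hp : ∀ r : G.Walk u v, p.length ≤ r.length) : p.length = G.dist u v := by
  obtain ⟨r, hr⟩ := p.reachable.exists_walk_length_eq_dist
  exact le_antisymm (hr ▸ hp r) (dist_le p)

section Cycle

variable {m : ℕ} {c : ZMod m → V}

theorem exists_walk_length_of_adj_add_one (hc : ∀ i, G.Adj (c i) (c (i + 1))) (a : ZMod m) :
    ∀ t : ℕ, ∃ w : G.Walk (c a) (c (a + t)), w.length = t
  | 0 => ⟨Walk.nil.copy rfl (by simp), by simp⟩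
  | t + 1 => by
    obtain ⟨w, hw⟩ := exists_walk_length_of_adj_add_one hc a t
    exact ⟨(w.concat (hc _)).copy rfl (by push_cast; rw [add_assoc]), by simp [hw]⟩

theorem dist_add_le_of_adj_add_one (hc : ∀ i, G.Adj (c i) (c (i + 1))) (a : ZMod m) (t : ℕ) :
    G.dist (c a) (c (a + t)) ≤ t := by
  obtain ⟨w, hw⟩ := exists_walk_length_of_adj_add_one hc a t
  exact (dist_le w).trans hw.le

theorem reachable_of_adj_add_one [NeZero m] (hc : ∀ i, G.Adj (c i) (c (i + 1))) (a b : ZMod m) :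
    G.Reachable (c a) (c b) := by
  obtain ⟨w, -⟩ := exists_walk_length_of_adj_add_one hc a (b - a).val
  simpa using w.reachable

theorem adj_sub_one_of_adj_add_one (hc : ∀ i, G.Adj (c i) (c (i + 1))) (a : ZMod m) :
    G.Adj (c a) (c (a - 1)) := by
  simpa using (hc (a - 1)).symm

end Cycle

section OddCycle

variable {n : ℕ} {c : ZMod (2 * n + 1) → V}

theorem ZMod.two_mul_add_one_eq_zero : (2 * n + 1 : ZMod (2 * n + 1)) = 0 := by
  exact_mod_cast ZMod.natCast_self (2 * n + 1)

structure IsGeodesicSplitAt (G : SimpleGraph V) (c : ZMod (2 * n + 1) → V)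
    (k : ZMod (2 * n + 1)) : Prop where
  dist_add : G.dist (c k) (c (k + n)) = n
  dist_sub : G.dist (c k) (c (k - n)) = n
  add_one_ne_sub_one : c (k + 1) ≠ c (k - 1)

namespace IsGeodesicSplitAt

variable {k : ZMod (2 * n + 1)}

theorem dist_add_of_le (hc : ∀ i, G.Adj (c i) (c (i + 1))) (h : IsGeodesicSplitAt G c k)
    {t : ℕ} (ht : t ≤ n) : G.dist (c k) (c (k + t)) = t := by
  have hle := dist_add_le_of_adj_add_one hc k t
  have hrest := dist_add_le_of_adj_add_one hc (k + t) (n - t)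
  rw [Nat.cast_sub ht, add_add_sub_cancel] at hrest
  have := (reachable_of_adj_add_one hc k (k + t)).dist_triangle_left (c (k + n))
  have := h.dist_add
  omega

theorem dist_add_sub (hG : IsGeodetic G) (hc : ∀ i, G.Adj (c i) (c (i + 1)))
    (h : IsGeodesicSplitAt G c k) {i : ℕ} (hi : 1 ≤ i) (hin : i ≤ n) :
    G.dist (c (k + i)) (c (k - n)) = n + 1 - i := by
  have h2n := ZMod.two_mul_add_one_eq_zero (n := n)
  have hR := reachable_of_adj_add_one hc
  have hup : G.dist (c (k + i)) (c (k - n)) ≤ n + 1 - i := by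
    have := dist_add_le_of_adj_add_one hc (k + i) (n + 1 - i)
    rwa [show k + i + ((n + 1 - i : ℕ) : ZMod (2 * n + 1)) = k - n by
      push_cast [Nat.cast_sub (show i ≤ n + 1 by omega)]; linear_combination h2n] at this
  have hki := h.dist_add_of_le hc hin
  have hlow := (hR k (k + i)).dist_triangle_left (c (k - n))
  have := h.dist_sub
  by_contra hne
  -- otherwise `c (k + 1)` and `c (k - 1)` both lie on geodesics from `c k` to `c (k - n)`
  apply h.add_one_ne_sub_one
  refine hG.eq_of_dist_add_dist_le (hR k _) (hR k _) (hR k (k - n)) ?_ ?_ ?_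
  · have h1 := dist_add_le_of_adj_add_one hc (k + 1) (i - 1)
    rw [Nat.cast_sub hi, Nat.cast_one, add_add_sub_cancel] at h1
    have := (hR (k + 1) (k + i)).dist_triangle_left (c (k - n))
    have := dist_eq_one_iff_adj.mpr (hc k)
    omega
  · have h1 := dist_add_le_of_adj_add_one hc (k - n) (n - 1)
    rw [Nat.cast_sub (by omega : 1 ≤ n), Nat.cast_one, show k - n + (n - 1) = k - 1 by ring,
      dist_comm] at h1
    have := dist_eq_one_iff_adj.mpr (adj_sub_one_of_adj_add_one hc k)
    omega
  · rw [dist_eq_one_iff_adj.mpr (hc k), dist_eq_one_iff_adj.mpr (adj_sub_one_of_adj_add_one hc k)]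

theorem succ (hG : IsGeodetic G) (hc : ∀ i, G.Adj (c i) (c (i + 1))) (hn : 1 ≤ n)
    (h : IsGeodesicSplitAt G c k) : IsGeodesicSplitAt G c (k + 1) := by
  have h2n := ZMod.two_mul_add_one_eq_zero (n := n)
  have hR := reachable_of_adj_add_one hc
  have hw : G.dist (c (k + 1)) (c (k - n)) = n := by
    simpa using h.dist_add_sub hG hc le_rfl hn
  refine ⟨?_, ?_, ?_⟩
  · rwa [show k - n = k + 1 + n by linear_combination -h2n] at hw
  · have hvw : G.dist (c (k + 1 - n)) (c (k - n)) = 1 := by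
      rw [dist_comm, dist_eq_one_iff_adj]
      simpa [sub_add_eq_add_sub] using hc (k - n)
    have hv'w : G.dist (c (k + n)) (c (k - n)) = 1 := by
      rw [dist_eq_one_iff_adj]
      simpa [show k + n + 1 = k - n by linear_combination h2n] using hc (k + n)
    have huv : G.dist (c (k + 1)) (c (k + 1 - n)) ≤ n := by
      simpa [dist_comm] using dist_add_le_of_adj_add_one hc (k + 1 - n) n
    have huv' : G.dist (c (k + 1)) (c (k + n)) ≤ n - 1 := by
      simpa [Nat.cast_sub hn, add_add_sub_cancel] using
        dist_add_le_of_adj_add_one hc (k + 1) (n - 1)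
    have hkv : G.dist (c k) (c (k + 1 - n)) ≤ n - 1 := by
      simpa [Nat.cast_sub hn, dist_comm] using
        dist_add_le_of_adj_add_one hc (k + 1 - n) (n - 1)
    have := (hR (k + 1) (k + 1 - n)).dist_triangle_left (c (k - n))
    have := (hR (k + 1) (k + n)).dist_triangle_left (c (k - n))
    have := h.dist_add
    by_contra hne
    -- otherwise `c (k + 1 - n)` and `c (k + n)` both lie on geodesics from `c (k + 1)` to
    -- `c (k - n)`, at the same distance `n - 1` from `c (k + 1)`
    have hvv' : c (k + 1 - n) = c (k + n) :=
      hG.eq_of_dist_add_dist_le (hR _ _) (hR _ _) (hR (k + 1) (k - n)) (by omega) (by omega)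
        (by omega)
    rw [hvv'] at hkv
    omega
  · rcases Nat.lt_or_ge 1 n with hn2 | hn1
    · have := h.dist_add_of_le hc (t := 2) hn2
      intro heq
      rw [add_assoc, one_add_one_eq_two, add_sub_cancel_right] at heq
      rw [Nat.cast_ofNat, heq, dist_self] at this
      exact two_ne_zero this.symm
    · have := h.dist_sub
      obtain rfl : n = 1 := le_antisymm hn1 hn
      rw [show k - (1 : ℕ) = k + 1 + 1 by push_cast at h2n ⊢; linear_combination -h2n] at this
      intro heq
      rw [heq, add_sub_cancel_right, dist_self] at this
      exact zero_ne_one this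

theorem of_zero (hG : IsGeodetic G) (hc : ∀ i, G.Adj (c i) (c (i + 1))) (hn : 1 ≤ n)
    (h₀ : IsGeodesicSplitAt G c 0) (k : ZMod (2 * n + 1)) : IsGeodesicSplitAt G c k := by
  rw [← ZMod.natCast_zmod_val k]
  induction k.val with
  | zero => simpa using h₀
  | succ t ih => simpa using ih.succ hG hc hn

end IsGeodesicSplitAt

theorem dist_eq_val_sub_of_isGeodesicSplitAt (hG : IsGeodetic G)
    (hc : ∀ i, G.Adj (c i) (c (i + 1))) (hn : 1 ≤ n) (h₀ : IsGeodesicSplitAt G c 0)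
    {i j : ZMod (2 * n + 1)} (hij : (j - i).val ≤ n) : G.dist (c i) (c j) = (j - i).val := by
  rcases Nat.eq_zero_or_pos (j - i).val with h0 | hpos
  · obtain rfl : j = i := sub_eq_zero.mp ((ZMod.val_eq_zero _).mp h0)
    simp
  · have key := (IsGeodesicSplitAt.of_zero hG hc hn h₀ (j + n)).dist_add_sub hG hc
      (i := n + 1 - (j - i).val) (by omega) (by omega)
    have he : ((j - i).val : ZMod (2 * n + 1)) = j - i := ZMod.natCast_zmod_val _
    have h2n := ZMod.two_mul_add_one_eq_zero (n := n)
    rwa [Nat.cast_sub (by omega), add_sub_cancel_right, Nat.cast_add, Nat.cast_one, he,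
      show j + n + (n + 1 - (j - i)) = i by linear_combination h2n,
      show n + 1 - (n + 1 - (j - i).val) = (j - i).val by omega] at key

theorem isIEC_of_isGeodesicSplitAt (hG : IsGeodetic G) (hc : ∀ i, G.Adj (c i) (c (i + 1)))
    (hn : 1 ≤ n) (h₀ : IsGeodesicSplitAt G c 0) : IsIEC G (2 * n + 1) c := by
  have hdist (i j : ZMod (2 * n + 1)) : G.dist (c i) (c j) = min (j - i).val (i - j).val := by
    rcases eq_or_ne i j with rfl | hij
    · simp
    have hsum : (j - i).val + (i - j).val = 2 * n + 1 := by
      have := ZMod.val_lt (j - i)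
      rw [← neg_sub j i, ZMod.neg_val, if_neg (sub_ne_zero.mpr hij.symm)]
      omega
    rcases le_or_gt (j - i).val n with h | h
    · rw [dist_eq_val_sub_of_isGeodesicSplitAt hG hc hn h₀ h]
      omega
    · rw [SimpleGraph.dist_comm,
        dist_eq_val_sub_of_isGeodesicSplitAt hG hc hn h₀ (by omega : (i - j).val ≤ n)]
      omega
  refine ⟨⟨by omega, fun i j hij => ?_, hc⟩, hdist⟩
  have := hdist i j
  rw [hij, SimpleGraph.dist_self] at this
  obtain h | h : (j - i).val = 0 ∨ (i - j).val = 0 := by omega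
  · exact (sub_eq_zero.mp ((ZMod.val_eq_zero _).mp h)).symm
  · exact sub_eq_zero.mp ((ZMod.val_eq_zero _).mp h)

end OddCycle

section GluedCircuit

variable {n : ℕ} {u₀ uN uN' : V}

def gluedCircuit (p : G.Walk u₀ uN) (q : G.Walk u₀ uN') (n : ℕ) : ZMod (2 * n + 1) → V :=
  fun i => if i.val ≤ n then p.getVert i.val else q.getVert (2 * n + 1 - i.val)

theorem gluedCircuit_natCast (p : G.Walk u₀ uN) (q : G.Walk u₀ uN') {t : ℕ}
    (ht : t ≤ 2 * n + 1) :
    gluedCircuit p q n t = if t ≤ n then p.getVert t else q.getVert (2 * n + 1 - t) := by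
  rcases ht.lt_or_eq with ht | rfl
  · simp [gluedCircuit, ZMod.val_natCast_of_lt ht]
  · rw [if_neg (by omega), Nat.sub_self, Walk.getVert_zero]
    simp [gluedCircuit]

theorem adj_gluedCircuit_add_one {p : G.Walk u₀ uN} {q : G.Walk u₀ uN'} (hpl : p.length = n)
    (hql : q.length = n) (hadj : G.Adj uN uN') (i : ZMod (2 * n + 1)) :
    G.Adj (gluedCircuit p q n i) (gluedCircuit p q n (i + 1)) := by
  obtain ⟨t, ht, rfl⟩ : ∃ t < 2 * n + 1, (t : ZMod (2 * n + 1)) = i :=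
    ⟨i.val, ZMod.val_lt i, ZMod.natCast_zmod_val i⟩
  rw [← Nat.cast_add_one, gluedCircuit_natCast p q ht.le, gluedCircuit_natCast p q ht]
  split_ifs with h h' h'
  · exact p.adj_getVert_succ (by omega)
  · obtain rfl : t = n := by omega
    rw [show 2 * t + 1 - (t + 1) = q.length by omega, Walk.getVert_length, ← hpl,
      Walk.getVert_length]
    exact hadj
  · omega
  · rw [show 2 * n + 1 - t = 2 * n - t + 1 by omega,
      show 2 * n + 1 - (t + 1) = 2 * n - t by omega]
    exact (q.adj_getVert_succ (by omega)).symm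

theorem isGeodesicSplitAt_gluedCircuit_zero (hn : 1 ≤ n) {p : G.Walk u₀ uN}
    {q : G.Walk u₀ uN'} (hpl : p.length = n) (hql : q.length = n)
    (hpgeo : ∀ r : G.Walk u₀ uN, p.length ≤ r.length)
    (hqgeo : ∀ r : G.Walk u₀ uN', q.length ≤ r.length) (hne : p.getVert 1 ≠ q.getVert 1) :
    IsGeodesicSplitAt G (gluedCircuit p q n) 0 := by
  have h2n := ZMod.two_mul_add_one_eq_zero (n := n)
  have hc₀ : gluedCircuit p q n 0 = u₀ := by simp [gluedCircuit]
  refine ⟨?_, ?_, ?_⟩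
  · rw [hc₀, zero_add, gluedCircuit_natCast p q (by omega), if_pos le_rfl, ← hpl,
      Walk.getVert_length, ← p.length_eq_dist_of_forall_length_le hpgeo]
  · rw [hc₀,
      show (0 : ZMod (2 * n + 1)) - n = (n + 1 : ℕ) by push_cast; linear_combination -h2n,
      gluedCircuit_natCast p q (by omega), if_neg (by omega),
      show 2 * n + 1 - (n + 1) = q.length by omega, Walk.getVert_length, ← hql,
      ← q.length_eq_dist_of_forall_length_le hqgeo]
  · rw [zero_add, ← Nat.cast_one, show (0 : ZMod (2 * n + 1)) - (1 : ℕ) = (2 * n : ℕ) by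
        push_cast; linear_combination -h2n,
      gluedCircuit_natCast p q (by omega), gluedCircuit_natCast p q (by omega), if_pos hn,
      if_neg (by omega), show 2 * n + 1 - 2 * n = 1 by omega]
    exact hne

end GluedCircuit

end

theorem stmt0_general {V : Type*} (G : SimpleGraph V) (hG : IsGeodetic G) (n : ℕ) (hn : 1 ≤ n)
    {u₀ uN uN' : V} (p : G.Walk u₀ uN) (q : G.Walk u₀ uN')
    (hpl : p.length = n) (hql : q.length = n)
    (hpgeo : ∀ r : G.Walk u₀ uN, p.length ≤ r.length)
    (hqgeo : ∀ r : G.Walk u₀ uN', q.length ≤ r.length)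
    (hne : p.getVert 1 ≠ q.getVert 1) (hadj : G.Adj uN uN') :
    IsIEC G (2 * n + 1)
      (fun i : ZMod (2 * n + 1) =>
        if i.val ≤ n then p.getVert i.val else q.getVert (2 * n + 1 - i.val)) :=
  isIEC_of_isGeodesicSplitAt hG (adj_gluedCircuit_add_one hpl hql hadj) hn
    (isGeodesicSplitAt_gluedCircuit_zero hn hpl hql hpgeo hqgeo hne)

theorem stmt0 {V : Type*} (G : SimpleGraph V) (hG : IsGeodetic G) (n : ℕ) (hn : 1 ≤ n)
    {u₀ uN uN' : V} (p : G.Walk u₀ uN) (q : G.Walk u₀ uN')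
    (hp : p.IsPath) (hq : q.IsPath) (hpl : p.length = n) (hql : q.length = n)
    (hpgeo : ∀ r : G.Walk u₀ uN, p.length ≤ r.length)
    (hqgeo : ∀ r : G.Walk u₀ uN', q.length ≤ r.length)
    (hne : p.getVert 1 ≠ q.getVert 1) (hadj : G.Adj uN uN') :
    IsIEC G (2 * n + 1)
      (fun i : ZMod (2 * n + 1) =>
        if i.val ≤ n then p.getVert i.val else q.getVert (2 * n + 1 - i.val)) :=
  stmt0_general G hG n hn p q hpl hql hpgeo hqgeo hne hadj
end

section
/- Let Γ be a locally-finite simple geodetic graph. If ρ is an embedded circuit of diameter exceeding two which has minimal length among all embedded circuits of diameter exceeding two in Γ, then ρ contains a subpath of length three which is a geodesic in Γ. -/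
section Aux

open SimpleGraph

variable {V : Type*} {G : SimpleGraph V} {m : ℕ} {c : ZMod m → V}

/-- walk along a circuit -/
lemma circuit_walk (hc : IsEmbCircuit G m c) (a : ZMod m) (t : ℕ) :
    ∃ w : G.Walk (c a) (c (a + t)), w.length = t := by
  induction t with
  | zero => exact ⟨Walk.nil.copy rfl (by norm_num), by simp⟩
  | succ t ih =>
    obtain ⟨w, hw⟩ := ih
    refine ⟨(w.concat (hc.2.2 (a + t))).copy rfl (by push_cast; ring_nf), by simp [hw]⟩

lemma dist_le_circuit (hc : IsEmbCircuit G m c) (a : ZMod m) (t : ℕ) :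
    G.dist (c a) (c (a + t)) ≤ t := by
  obtain ⟨w, hw⟩ := circuit_walk hc a t
  simpa [hw] using SimpleGraph.dist_le w

lemma circuit_reachable (hc : IsEmbCircuit G m c) (a b : ZMod m) :
    G.Reachable (c a) (c b) := by
  haveI : NeZero m := ⟨by have := hc.1; omega⟩
  obtain ⟨w, -⟩ := circuit_walk hc a (b - a).val
  rw [ZMod.natCast_zmod_val, add_sub_cancel] at w
  exact ⟨w⟩

lemma reachable_dist_triangle {u v w : V} (h1 : G.Reachable u v) (h2 : G.Reachable v w) :
    G.dist u w ≤ G.dist u v + G.dist v w := by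
  obtain ⟨p, hp⟩ := h1.exists_walk_length_eq_dist
  obtain ⟨q, hq⟩ := h2.exists_walk_length_eq_dist
  rw [← hp, ← hq, ← Walk.length_append]
  apply SimpleGraph.dist_le

/-- discrete continuity: first crossing of level 3 -/
lemma circuit_cross (hc : IsEmbCircuit G m c) (a : ZMod m) :
    ∀ t : ℕ, 3 ≤ G.dist (c a) (c (a + t)) → ∃ s, s ≤ t ∧ G.dist (c a) (c (a + s)) = 3 := by
  intro t
  induction t with
  | zero =>
    intro h
    rw [show a + ((0:ℕ):ZMod m) = a by push_cast; ring] at h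
    have h0 : G.dist (c a) (c a) = 0 := SimpleGraph.dist_self
    rw [h0] at h
    exact absurd h (by norm_num)
  | succ t ih =>
    intro h
    by_cases h3 : 3 ≤ G.dist (c a) (c (a + t))
    · obtain ⟨s, hs, hd⟩ := ih h3
      exact ⟨s, hs.trans (Nat.le_succ t), hd⟩
    · refine ⟨t + 1, le_rfl, le_antisymm ?_ h⟩
      have hre : G.Reachable (c a) (c (a + t)) := circuit_reachable hc _ _
      have hadj : G.Adj (c (a + t)) (c (a + (t + 1 : ℕ))) := by
        have := hc.2.2 (a + t)
        convert this using 2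
        push_cast; ring
      have h1 : G.dist (c (a + t)) (c (a + (t + 1 : ℕ))) ≤ 1 := by
        simpa using SimpleGraph.dist_le (Walk.cons hadj Walk.nil)
      have := reachable_dist_triangle hre hadj.reachable
      omega

lemma geodetic_unique (hG : IsGeodetic G) {u v : V} (w1 w2 : G.Walk u v)
    (h1 : ∀ q : G.Walk u v, w1.length ≤ q.length)
    (h2 : ∀ q : G.Walk u v, w2.length ≤ q.length) : w1 = w2 := by
  obtain ⟨p, -, hu⟩ := hG u v
  rw [hu w1 h1, hu w2 h2]

end Aux

theorem stmt2 {V : Type*} (G : SimpleGraph V) (hlf : ∀ v : V, (G.neighborSet v).Finite)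
    (hG : IsGeodetic G) (m : ℕ) (c : ZMod m → V) (hc : IsEmbCircuit G m c)
    (hdiam : ∃ i j : ZMod m, 2 < G.dist (c i) (c j))
    (hmin : ∀ (m' : ℕ) (c' : ZMod m' → V), IsEmbCircuit G m' c' →
      (∃ i j : ZMod m', 2 < G.dist (c' i) (c' j)) → m ≤ m') :
    ∃ i : ZMod m, G.dist (c i) (c (i + 3)) = 3 := by
  classical
  open SimpleGraph in
  haveI : NeZero m := ⟨by have := hc.1; omega⟩
  -- there is a pair with distance exactly 3, and bounded circuit gap
  obtain ⟨i0, j0, hd0⟩ := hdiam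
  have hj0 : j0 = i0 + ((j0 - i0).val : ℕ) := by
    rw [ZMod.natCast_zmod_val, add_sub_cancel]
  have hK : ∃ t : ℕ, ∃ a : ZMod m, G.dist (c a) (c (a + (t : ℕ))) = 3 := by
    obtain ⟨s, hs, hds⟩ := circuit_cross hc i0 (j0 - i0).val (by rw [← hj0]; omega)
    exact ⟨s, i0, hds⟩
  set k := Nat.find hK with hkdef
  obtain ⟨i, hi⟩ := Nat.find_spec hK
  rw [← hkdef] at hi
  -- basic bounds on k
  have hk3 : 3 ≤ k := by
    have := dist_le_circuit hc i k
    omega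
  have hkm : k < m := by
    obtain ⟨s, hs, hds⟩ := circuit_cross hc i0 (j0 - i0).val (by rw [← hj0]; omega)
    have h1 : k ≤ s := Nat.find_min' hK ⟨i0, hds⟩
    have h2 : (j0 - i0).val < m := ZMod.val_lt _
    omega
  have hmk : k ≤ m - 3 := by
    have hcast : ((k : ℕ) : ZMod m) + ((m - k : ℕ) : ZMod m) = 0 := by
      have : ((k : ℕ) : ZMod m) + ((m - k : ℕ) : ZMod m) = ((k + (m - k) : ℕ) : ZMod m) := by
        push_cast; ring
      rw [this, Nat.add_sub_cancel' (le_of_lt hkm), ZMod.natCast_self]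
    have hle := dist_le_circuit hc (i + (k : ℕ)) (m - k)
    rw [add_assoc, hcast, add_zero] at hle
    rw [SimpleGraph.dist_comm] at hle
    omega
  -- if k = 3 we are done
  rcases Nat.lt_or_ge k 4 with hk4 | hk4
  · have hk : k = 3 := by omega
    refine ⟨i, ?_⟩
    have : ((3 : ℕ) : ZMod m) = (3 : ZMod m) := by push_cast; ring
    rw [hk, this] at hi
    exact hi
  -- otherwise derive a contradiction
  exfalso
  -- any pair with circuit gap < k is at distance ≤ 2
  have small : ∀ (a : ZMod m) (t : ℕ), t < k → G.dist (c a) (c (a + (t : ℕ))) ≤ 2 := by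
    intro a t ht
    by_contra h
    obtain ⟨s, hs, hds⟩ := circuit_cross hc a t (by omega)
    exact Nat.find_min hK (show s < k by omega) ⟨a, hds⟩
  have hcastk1 : ((k - 1 : ℕ) : ZMod m) = ((k : ℕ) : ZMod m) - 1 := by
    have : ((k - 1 : ℕ) : ZMod m) + 1 = ((k : ℕ) : ZMod m) := by
      rw [show ((k : ℕ) : ZMod m) = ((k - 1 + 1 : ℕ) : ZMod m) by congr 1; omega]
      push_cast; ring
    linear_combination this
  -- dist from c(i+1) to c(i+k) is 2
  have hA1 : G.Adj (c i) (c (i + 1)) := hc.2.2 i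
  have hA2 : G.Adj (c (i + ((k - 1 : ℕ) : ZMod m))) (c (i + (k : ℕ))) := by
    have := hc.2.2 (i + ((k - 1 : ℕ) : ZMod m))
    convert this using 2
    rw [hcastk1]; ring
  have d1 : G.dist (c (i + 1)) (c (i + (k : ℕ))) = 2 := by
    have hle : G.dist (c (i + 1)) (c (i + (k : ℕ))) ≤ 2 := by
      have := small (i + 1) (k - 1) (by omega)
      rwa [hcastk1, show i + 1 + (((k : ℕ) : ZMod m) - 1) = i + (k : ℕ) by ring] at this
    have htri := reachable_dist_triangle hA1.reachable (circuit_reachable hc (i + 1) (i + (k : ℕ)))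
    have h1 : G.dist (c i) (c (i + 1)) ≤ 1 := by
      simpa using SimpleGraph.dist_le (Walk.cons hA1 Walk.nil)
    omega
  have d2 : G.dist (c i) (c (i + ((k - 1 : ℕ) : ZMod m))) = 2 := by
    have hle : G.dist (c i) (c (i + ((k - 1 : ℕ) : ZMod m))) ≤ 2 := small i (k - 1) (by omega)
    have htri := reachable_dist_triangle
      (circuit_reachable hc i (i + ((k - 1 : ℕ) : ZMod m))) hA2.reachable
    have h1 : G.dist (c (i + ((k - 1 : ℕ) : ZMod m))) (c (i + (k : ℕ))) ≤ 1 := by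
      simpa using SimpleGraph.dist_le (Walk.cons hA2 Walk.nil)
    omega
  -- the unique geodesic from c i to c(i+k) passes through c(i+1) and c(i+(k-1))
  obtain ⟨wA, hwA⟩ := (circuit_reachable hc (i + 1) (i + (k : ℕ))).exists_walk_length_eq_dist
  rw [d1] at hwA
  obtain ⟨wB, hwB⟩ :=
    (circuit_reachable hc (i + ((k - 1 : ℕ) : ZMod m)) i).exists_walk_length_eq_dist
  rw [SimpleGraph.dist_comm, d2] at hwB
  set w1 : G.Walk (c i) (c (i + (k : ℕ))) := Walk.cons hA1 wA with hw1def
  set w2 : G.Walk (c (i + (k : ℕ))) (c i) := Walk.cons hA2.symm wB with hw2def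
  have hw1len : w1.length = 3 := by simp [hw1def, hwA]
  have hw2len : w2.length = 3 := by simp [hw2def, hwB]
  have hshort1 : ∀ q : G.Walk (c i) (c (i + (k : ℕ))), w1.length ≤ q.length := by
    intro q
    have := SimpleGraph.dist_le q
    omega
  have hshort2 : ∀ q : G.Walk (c i) (c (i + (k : ℕ))), w2.reverse.length ≤ q.length := by
    intro q
    have := SimpleGraph.dist_le q
    have hd : G.dist (c i) (c (i + (k : ℕ))) = 3 := hi
    simp only [Walk.length_reverse, hw2len]
    omega
  have heq : w1 = w2.reverse := geodetic_unique hG w1 w2.reverse hshort1 hshort2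
  have hv1 : w1.getVert 1 = c (i + 1) := by
    simp [hw1def, Walk.getVert_cons_succ]
  have hv2 : w1.getVert 2 = c (i + ((k - 1 : ℕ) : ZMod m)) := by
    rw [heq, Walk.getVert_reverse]
    have : w2.length - 2 = 1 := by omega
    rw [this]
    simp [hw2def, Walk.getVert_cons_succ]
  have hAdj : G.Adj (c (i + 1)) (c (i + ((k - 1 : ℕ) : ZMod m))) := by
    rw [← hv1, ← hv2]
    exact w1.adj_getVert_succ (by omega)
  -- build a shorter circuit
  set m' := m - k + 3 with hm'def
  have hm'6 : 6 ≤ m' := by omega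
  haveI : NeZero m' := ⟨by omega⟩
  set f : ℕ → ℕ := fun t => if t ≤ 1 then t else if t = 2 then k - 1 else k - 3 + t with hfdef
  have hflt : ∀ r, r < m' → f r < m := by
    intro r hr
    simp only [hfdef]
    split_ifs <;> omega
  have hfinj : ∀ r s, r < m' → s < m' → f r = f s → r = s := by
    intro r s hr hs h
    simp only [hfdef] at h
    split_ifs at h <;> omega
  set c' : ZMod m' → V := fun t => c (i + ((f t.val : ℕ) : ZMod m)) with hc'def
  have hemb : IsEmbCircuit G m' c' := by
    refine ⟨by omega, ?_, ?_⟩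
    · intro s t h
      simp only [hc'def] at h
      have h2 := hc.2.1 h
      have h3 : ((f s.val : ℕ) : ZMod m) = ((f t.val : ℕ) : ZMod m) := by
        have := add_left_cancel h2
        exact this
      have h4 : f s.val = f t.val := by
        have hs := hflt s.val (ZMod.val_lt s)
        have ht := hflt t.val (ZMod.val_lt t)
        have := congrArg ZMod.val h3
        rwa [ZMod.val_natCast_of_lt hs, ZMod.val_natCast_of_lt ht] at this
      have h5 : s.val = t.val := hfinj _ _ (ZMod.val_lt s) (ZMod.val_lt t) h4
      exact ZMod.val_injective m' h5
    · intro t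
      haveI : Fact (1 < m') := ⟨by omega⟩
      have step : ∀ x y : ZMod m, y = x + 1 → G.Adj (c (i + x)) (c (i + y)) := by
        intro x y h
        subst h
        have := hc.2.2 (i + x)
        rwa [add_assoc] at this
      have hr : t.val < m' := ZMod.val_lt t
      have hadd : (t + 1).val = (t.val + 1) % m' := by
        rw [ZMod.val_add, ZMod.val_one]
      show G.Adj (c (i + ((f t.val : ℕ) : ZMod m))) (c (i + ((f (t + 1).val : ℕ) : ZMod m)))
      by_cases hlast : t.val = m' - 1
      · have h0 : (t + 1).val = 0 := by
          rw [hadd, hlast, show m' - 1 + 1 = m' by omega, Nat.mod_self]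
        rw [h0, hlast]
        have hfl : f (m' - 1) = m - 1 := by simp only [hfdef]; split_ifs <;> omega
        have hf0 : f 0 = 0 := by simp [hfdef]
        rw [hfl, hf0]
        apply step
        rw [show ((0 : ℕ) : ZMod m) = ((m : ℕ) : ZMod m) by rw [ZMod.natCast_self]; norm_num]
        rw [show (m : ℕ) = (m - 1) + 1 by omega]
        push_cast
        ring
      · have h1 : (t + 1).val = t.val + 1 := by
          rw [hadd, Nat.mod_eq_of_lt (by omega)]
        rw [h1]
        rcases Nat.lt_or_ge t.val 3 with h3 | h3
        · interval_cases h : t.val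
          · have e0 : f 0 = 0 := by simp [hfdef]
            have e1 : f 1 = 1 := by simp [hfdef]
            rw [e0, e1]
            exact step _ _ (by push_cast; ring)
          · have e1 : f 2 = k - 1 := by simp [hfdef]
            have e0 : f 1 = 1 := by simp [hfdef]
            rw [e0, e1]
            simpa using hAdj
          · have e0 : f 2 = k - 1 := by simp [hfdef]
            have e1 : f 3 = k := by simp only [hfdef]; split_ifs <;> omega
            rw [e0, e1]
            exact step _ _ (by rw [hcastk1]; ring)
        · have e0 : f t.val = k - 3 + t.val := by simp only [hfdef]; split_ifs <;> omega
          have e1 : f (t.val + 1) = k - 3 + t.val + 1 := by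
            simp only [hfdef]; split_ifs <;> omega
          rw [e0, e1]
          exact step _ _ (by push_cast; ring)
  have hdiam' : ∃ a b : ZMod m', 2 < G.dist (c' a) (c' b) := by
    refine ⟨0, 3, ?_⟩
    have h0 : (0 : ZMod m').val = 0 := ZMod.val_zero
    have h3 : (3 : ZMod m').val = 3 := by
      rw [show (3 : ZMod m') = ((3 : ℕ) : ZMod m') by push_cast; ring]
      rw [ZMod.val_natCast_of_lt (by omega)]
    simp only [hc'def, h0, h3]
    have hf0 : f 0 = 0 := by simp [hfdef]
    have hf3 : f 3 = k := by simp [hfdef]; omega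
    rw [hf0, hf3]
    simp only [Nat.cast_zero, add_zero]
    omega
  have := hmin m' c' hemb hdiam'
  omega
end

section
/- In a geodetic graph, if w_0, w_1, w_2, w_3, w_0 is an embedded circuit of length four, then the induced subgraph on {w_0, w_1, w_2, w_3} is a complete graph (in particular w_0 is adjacent to w_2 and w_1 is adjacent to w_3). -/
lemma two_le_length_aux {V : Type*} {G : SimpleGraph V} {u v : V} (hne : u ≠ v)
    (hna : ¬ G.Adj u v) (q : G.Walk u v) : 2 ≤ q.length := by
  match q with
  | .nil => exact absurd rfl hne
  | .cons h .nil => exact absurd h hna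
  | .cons h (.cons h' q') => simp [SimpleGraph.Walk.length_cons]

lemma chord_aux {V : Type*} {G : SimpleGraph V} (hG : IsGeodetic G) {u a w b : V}
    (hne : u ≠ w) (hab : a ≠ b) (h1 : G.Adj u a) (h2 : G.Adj a w) (h3 : G.Adj u b)
    (h4 : G.Adj b w) : G.Adj u w := by
  by_contra hna
  obtain ⟨p, _, hu⟩ := hG u w
  have hmin : ∀ q : G.Walk u w, 2 ≤ q.length := two_le_length_aux hne hna
  set p1 : G.Walk u w := .cons h1 (.cons h2 .nil) with hp1
  set p2 : G.Walk u w := .cons h3 (.cons h4 .nil) with hp2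
  have e1 : p1 = p := hu p1 (fun q => by
    have := hmin q; simp [hp1, SimpleGraph.Walk.length_cons]; omega)
  have e2 : p2 = p := hu p2 (fun q => by
    have := hmin q; simp [hp2, SimpleGraph.Walk.length_cons]; omega)
  have hv : p1.getVert 1 = p2.getVert 1 := by rw [e1, e2]
  simp [hp1, hp2, SimpleGraph.Walk.getVert] at hv
  exact hab hv

theorem stmt3 {V : Type*} (G : SimpleGraph V) (hG : IsGeodetic G) (w₀ w₁ w₂ w₃ : V)
    (hnd : ([w₀, w₁, w₂, w₃] : List V).Nodup)
    (h01 : G.Adj w₀ w₁) (h12 : G.Adj w₁ w₂) (h23 : G.Adj w₂ w₃) (h30 : G.Adj w₃ w₀) :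
    G.Adj w₀ w₂ ∧ G.Adj w₁ w₃ := by
  simp only [List.nodup_cons, List.mem_cons, List.mem_singleton, List.not_mem_nil] at hnd
  push_neg at hnd
  obtain ⟨⟨h02, h03', h04⟩, ⟨h13, h14, -⟩, ⟨h24, -⟩, -⟩ := hnd
  constructor
  · exact chord_aux hG h03' h14 h01 h12 h30.symm h23.symm
  · exact chord_aux hG h14 (Ne.symm h03') h12 h23 h01.symm h30.symm
end

section
/- Let Γ be a geodetic graph in which every isometrically embedded circuit has length at most five. Suppose ρ is an embedded circuit in Γ of diameter at least three which has minimal length among all such circuits, labeled 1 = u_0, u_1, ..., u_m = v_3, v_2, v_1, 1 where 1, v_1, v_2, v_3 is a geodesic subpath. Then m = 5, d(1,u_1) = 1, d(1,u_2) = d(1,u_3) = 2, d(1,u_4) = 3, and d(u_3, v_1) = 1. -/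
/-!
Splicing a detour (a path that leaves the circuit and returns to it, shorter than both arcs between
its ends) into either arc gives an embedded circuit shorter than `ρ`, hence of diameter at most two.
Since `d(1, v₃) = 3` and, by geodeticity, `d(u₁, v₃) ≥ 3` and `d(1, u_{m-1}) ≥ 3`, every detour,
in particular every chord, joins some `u_i` with `2 ≤ i ≤ m - 2` to `v₁` or `v₂`. As `ρ` has length
at least six it is not isometric, so it has a detour; if `ρ` had no chord, the two shorter circuits
spliced from it would bring two vertices of `ρ` closer together than geodeticity allows. Hence `ρ`
has a chord. A chord ending at `v₂` is impossible, a chord `u_i v₁` forces `i = m - 2`, and then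
the common neighbour of `1` and `u₃`, which can only be `v₁`, forces `m = 5`.
-/

lemma ZMod.min_val_sub_val_sub {n : ℕ} [NeZero n] (i j : ZMod n) :
    min (j - i).val (i - j).val =
      min (j.val - i.val + (i.val - j.val)) (n - (j.val - i.val + (i.val - j.val))) := by
  wlog h : i.val ≤ j.val generalizing i j
  · rw [min_comm, this j i (by omega)]
    congr 1 <;> omega
  have h₁ : (j - i).val = j.val - i.val := ZMod.val_sub h
  have h₂ : (i - j).val = if j - i = 0 then 0 else n - (j - i).val := by
    rw [← neg_sub, ZMod.neg_val]
  have := j.val_lt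
  split_ifs at h₂ with h₀
  · rw [h₀, ZMod.val_zero] at h₁
    omega
  · omega

lemma ZMod.natCast_eq_of_eq_add {n a b : ℕ} (h : a = b + n) : (a : ZMod n) = b := by
  simp [h]

open SimpleGraph

section

variable {V : Type*} {G : SimpleGraph V}

lemma exists_natCast_of_mem_range {n : ℕ} [NeZero n] {c : ZMod n → V} {x : V}
    (hx : x ∈ Set.range c) : ∃ r < n, x = c r := by
  obtain ⟨r, rfl⟩ := hx
  exact ⟨r.val, r.val_lt, by rw [ZMod.natCast_zmod_val]⟩

namespace SimpleGraph

lemma dist_eq_two_of_adj_of_adj {u v z : V} (hne : u ≠ v) (hnadj : ¬ G.Adj u v)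
    (hu : G.Adj u z) (hv : G.Adj z v) : G.dist u v = 2 := by
  have hle : G.dist u v ≤ 2 := by simpa using dist_le (.cons hu (.cons hv .nil))
  have h₀ : G.dist u v ≠ 0 :=
    dist_ne_zero_iff_ne_and_reachable.mpr ⟨hne, ⟨.cons hu (.cons hv .nil)⟩⟩
  have h₁ : G.dist u v ≠ 1 := fun h => hnadj (dist_eq_one_iff_adj.mp h)
  omega

lemma exists_adj_adj_of_dist_eq_two {u v : V} (hd : G.dist u v = 2) :
    ∃ z, G.Adj u z ∧ G.Adj z v := by
  obtain ⟨p, hp⟩ := exists_walk_of_dist_ne_zero (G := G) (u := u) (v := v) (by omega)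
  rw [hd] at hp
  have h₂ := p.adj_getVert_succ (i := 1) (by omega)
  rw [show 1 + 1 = p.length by omega, Walk.getVert_length] at h₂
  exact ⟨p.getVert 1, by simpa using p.adj_getVert_succ (i := 0) (by omega), h₂⟩

lemma exists_adj_adj_adj_of_dist_eq_three {u v : V} (hd : G.dist u v = 3) :
    ∃ x y, G.Adj u x ∧ G.Adj x y ∧ G.Adj y v := by
  obtain ⟨p, hp⟩ := exists_walk_of_dist_ne_zero (G := G) (u := u) (v := v) (by omega)
  rw [hd] at hp
  have h₃ := p.adj_getVert_succ (i := 2) (by omega)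
  rw [show 2 + 1 = p.length by omega, Walk.getVert_length] at h₃
  exact ⟨p.getVert 1, p.getVert 2, by simpa using p.adj_getVert_succ (i := 0) (by omega),
    p.adj_getVert_succ (i := 1) (by omega), h₃⟩

lemma Walk.dist_start_getVert_le {u v : V} (p : G.Walk u v) (l : ℕ) :
    G.dist u (p.getVert l) ≤ l :=
  (dist_le (p.take l)).trans (by simp [Walk.take_length])

lemma Walk.dist_getVert_end_le {u v : V} (p : G.Walk u v) (l : ℕ) :
    G.dist (p.getVert l) v ≤ p.length - l :=
  (dist_le (p.drop l)).trans (by simp [Walk.drop_length])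

end SimpleGraph

namespace IsGeodetic

lemma reachable (hG : IsGeodetic G) (u v : V) : G.Reachable u v :=
  ⟨(hG u v).exists.choose⟩

lemma connected [Nonempty V] (hG : IsGeodetic G) : G.Connected :=
  ⟨hG.reachable⟩

lemma eq_of_length_eq_dist (hG : IsGeodetic G) {u v : V} {p q : G.Walk u v}
    (hp : p.length = G.dist u v) (hq : q.length = G.dist u v) : p = q :=
  (hG u v).unique (fun r => hp ▸ dist_le r) (fun r => hq ▸ dist_le r)

lemma eq_of_adj_of_adj (hG : IsGeodetic G) {u v x y : V} (hne : u ≠ v) (hnadj : ¬ G.Adj u v)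
    (hux : G.Adj u x) (hxv : G.Adj x v) (huy : G.Adj u y) (hyv : G.Adj y v) : x = y := by
  have hd := dist_eq_two_of_adj_of_adj hne hnadj hux hxv
  have := congrArg (Walk.getVert · 1) <| hG.eq_of_length_eq_dist
    (p := .cons hux (.cons hxv .nil)) (q := .cons huy (.cons hyv .nil))
    (by simp [hd]) (by simp [hd])
  simpa using this

lemma eq_of_dist_le_two (hG : IsGeodetic G) {u v x y w : V} (hd : G.dist u v = 3)
    (hux : G.Adj u x) (hxy : G.Adj x y) (hyv : G.Adj y v) (hwv : G.Adj w v)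
    (hdw : G.dist u w ≤ 2) : w = y := by
  have htri : G.dist u v ≤ G.dist u w + G.dist w v := (hG.reachable u w).dist_triangle_left v
  have hwv' : G.dist w v ≤ 1 := by simpa using dist_le (.cons hwv .nil)
  obtain ⟨p, hp⟩ := exists_walk_of_dist_ne_zero (G := G) (u := w) (v := u)
    (by rw [G.dist_comm]; omega)
  have hd' : G.dist v u = 3 := by rw [G.dist_comm, hd]
  have := congrArg (Walk.getVert · 1) <| hG.eq_of_length_eq_dist (p := .cons hwv.symm p)
    (q := .cons hyv.symm (.cons hxy.symm (.cons hux.symm .nil)))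
    (by rw [G.dist_comm] at hp; simp; omega) (by simp [hd'])
  simpa using this

end IsGeodetic

def IsDetour {n : ℕ} (c : ZMod n → V) {P Q : ℕ} (p : G.Walk (c P) (c Q)) : Prop :=
  Q < n ∧ p.IsPath ∧ (∀ l, 0 < l → l < p.length → p.getVert l ∉ Set.range c) ∧
    p.length < Q - P ∧ Q - P + p.length < n

theorem exists_isDetour_of_dist_lt {n : ℕ} {c : ZMod n → V} (hconn : G.Connected) {a b : ℕ}
    (ha : a < n) (hb : b < n) (h₁ : G.dist (c a) (c b) < a - b + (b - a))
    (h₂ : a - b + (b - a) + G.dist (c a) (c b) < n) :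
    ∃ (P Q : ℕ) (p : G.Walk (c P) (c Q)), IsDetour c p := by
  have : NeZero n := ⟨by omega⟩
  induction hk : G.dist (c a) (c b) using Nat.strong_induction_on generalizing a b with
  | _ k ih =>
  wlog hab : a ≤ b generalizing a b
  · exact this hb ha (by rw [G.dist_comm]; omega) (by rw [G.dist_comm]; omega)
      (by rw [G.dist_comm, hk]) (by omega)
  obtain ⟨p, hp, hlen⟩ := hconn.exists_path_of_dist (c a) (c b)
  by_cases hoff : ∀ l, 0 < l → l < p.length → p.getVert l ∉ Set.range c
  · exact ⟨a, b, p, hb, hp, hoff, by omega, by omega⟩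
  push Not at hoff
  obtain ⟨l, hl₀, hlk, hr⟩ := hoff
  obtain ⟨r, hrn, hr⟩ := exists_natCast_of_mem_range hr
  -- The geodesic passes through `c r`, so `(a, r)` or `(r, b)` is again a pair of positions that
  -- is closer in `G` than along the circuit, now at a smaller distance.
  have d₁ : G.dist (c a) (c r) ≤ l := hr ▸ p.dist_start_getVert_le l
  have d₂ : G.dist (c r) (c b) ≤ k - l := hk ▸ hlen ▸ hr ▸ p.dist_getVert_end_le l
  by_cases s₁ : G.dist (c a) (c r) < a - r + (r - a) ∧ a - r + (r - a) + G.dist (c a) (c r) < n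
  · exact ih _ (by omega) ha hrn s₁.1 s₁.2 rfl
  by_cases s₂ : G.dist (c r) (c b) < r - b + (b - r) ∧ r - b + (b - r) + G.dist (c r) (c b) < n
  · exact ih _ (by omega) hrn hb s₂.1 s₂.2 rfl
  omega

def arcSplice {n : ℕ} (c : ZMod n → V) (i t : ℕ) {u v : V} (q : G.Walk u v) (x : ℕ) : V :=
  if x ≤ t then c (i + x : ℕ) else q.getVert (x - t)

namespace IsEmbCircuit

variable {n : ℕ} {c : ZMod n → V}

lemma adj_natCast (hc : IsEmbCircuit G n c) (j : ℕ) : G.Adj (c j) (c (j + 1 : ℕ)) := by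
  simpa using hc.2.2 j

lemma eq_of_apply_add_eq (hc : IsEmbCircuit G n c) {i x y : ℕ} (hx : x < n) (hy : y < n)
    (h : c (i + x : ℕ) = c (i + y : ℕ)) : x = y := by
  have h₁ : i + x ≡ i + y [MOD n] := (ZMod.natCast_eq_natCast_iff _ _ _).mp (hc.2.1 h)
  have h₂ : x % n = y % n := Nat.ModEq.add_left_cancel' i h₁
  rwa [Nat.mod_eq_of_lt hx, Nat.mod_eq_of_lt hy] at h₂

lemma natCast_ne (hc : IsEmbCircuit G n c) {a b : ℕ} (ha : a < n) (hb : b < n) (hab : a ≠ b) :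
    c a ≠ c b :=
  fun h => hab (hc.eq_of_apply_add_eq (i := 0) ha hb (by simpa using h))

lemma dist_add_le (hc : IsEmbCircuit G n c) (hconn : G.Connected) (i s : ℕ) :
    G.dist (c i) (c (i + s : ℕ)) ≤ s := by
  induction s with
  | zero => simp
  | succ s ih =>
    rw [← add_assoc]
    have hadj : G.dist (c (i + s : ℕ)) (c (i + s + 1 : ℕ)) ≤ 1 :=
      (dist_le (.cons (hc.adj_natCast (i + s)) .nil)).trans (by simp)
    have := hconn.dist_triangle (u := c i) (v := c (i + s : ℕ)) (w := c (i + s + 1 : ℕ))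
    omega

lemma dist_le_arcs (hc : IsEmbCircuit G n c) (hconn : G.Connected) {a b : ℕ} (hab : a ≤ b)
    (hb : b < n) : G.dist (c a) (c b) ≤ b - a ∧ G.dist (c a) (c b) ≤ n - (b - a) := by
  constructor
  · simpa [Nat.add_sub_cancel' hab] using hc.dist_add_le hconn a (b - a)
  · have h := hc.dist_add_le hconn b (n - (b - a))
    rwa [ZMod.natCast_eq_of_eq_add (show b + (n - (b - a)) = a + n by omega), G.dist_comm] at h

lemma isDetour_of_adj (hc : IsEmbCircuit G n c) {a b : ℕ} (hab : a + 2 ≤ b) (hb : b < n)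
    (hba : b + 1 < a + n) (hadj : G.Adj (c a) (c b)) : IsDetour c (.cons hadj .nil) :=
  ⟨hb, by simpa using hc.natCast_ne (by omega) hb (by omega),
    fun l hl hl' => by simp at hl'; omega, by simp; omega, by simp; omega⟩

lemma isDetour_of_adj_adj (hc : IsEmbCircuit G n c) {a b : ℕ} {z : V} (hab : a + 2 < b)
    (hb : b < n) (hba : b + 2 < a + n) (hz : z ∉ Set.range c) (ha : G.Adj (c a) z)
    (hb' : G.Adj z (c b)) : IsDetour c (.cons ha (.cons hb' .nil)) := by
  refine ⟨hb, ?_, fun l hl hl' => ?_, by simp; omega, by simp; omega⟩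
  · have := hc.natCast_ne (by omega) hb (by omega : a ≠ b)
    have : z ≠ c b := fun e => hz ⟨_, e.symm⟩
    have : c a ≠ z := fun e => hz ⟨_, e⟩
    simp_all
  · obtain rfl : l = 1 := by simp at hl'; omega
    simpa using hz

section Splice

variable {i t j : ℕ} (hc : IsEmbCircuit G n c) (hj : ((i + t : ℕ) : ZMod n) = j)
  {q : G.Walk (c j) (c i)} (hq : q.IsPath)
  (hoff : ∀ l, 0 < l → l < q.length → q.getVert l ∉ Set.range c)
include hc hj hq hoff

omit hc hq hoff in
lemma arcSplice_of_ge {x : ℕ} (hx : t ≤ x) : arcSplice c i t q x = q.getVert (x - t) := by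
  rcases hx.eq_or_lt with rfl | hx
  · rw [arcSplice, if_pos le_rfl, hj, Nat.sub_self, Walk.getVert_zero]
  · exact if_neg (by omega)

lemma arcSplice_injOn (htn : t < n) :
    Set.InjOn (arcSplice c i t q) {x | x < t + q.length} := by
  intro x hx y hy hxy
  simp only [Set.mem_ofPred_eq] at hx hy
  rcases (by omega : (x ≤ t ∧ y ≤ t) ∨ (t ≤ x ∧ t ≤ y) ∨ (x < t ∧ t < y) ∨
      (y < t ∧ t < x)) with ⟨hxt, hyt⟩ | ⟨hxt, hyt⟩ | ⟨hxt, hyt⟩ | ⟨hxt, hyt⟩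
  · rw [arcSplice, if_pos hxt, arcSplice, if_pos hyt] at hxy
    exact hc.eq_of_apply_add_eq (by omega) (by omega) hxy
  · rw [arcSplice_of_ge hj hxt, arcSplice_of_ge hj hyt] at hxy
    have := hq.getVert_injOn (by simp only [Set.mem_ofPred_eq]; omega)
      (by simp only [Set.mem_ofPred_eq]; omega) hxy
    omega
  · rw [arcSplice, if_pos hxt.le, arcSplice_of_ge hj hyt.le] at hxy
    exact absurd ⟨_, hxy⟩ (hoff (y - t) (by omega) (by omega))
  · rw [arcSplice_of_ge hj hyt.le, arcSplice, if_pos hxt.le] at hxy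
    exact absurd ⟨_, hxy.symm⟩ (hoff (x - t) (by omega) (by omega))

omit hq hoff in
lemma adj_arcSplice {x : ℕ} (ht : 0 < t) (hq0 : 0 < q.length) (hx : x < t + q.length) :
    G.Adj (arcSplice c i t q x) (arcSplice c i t q ((x + 1) % (t + q.length))) := by
  rcases (by omega : x + 1 < t + q.length ∨ x + 1 = t + q.length) with hx₁ | hx₁
  · rw [Nat.mod_eq_of_lt hx₁]
    rcases (by omega : x + 1 ≤ t ∨ t ≤ x) with hxt | hxt
    · rw [arcSplice, if_pos (by omega), arcSplice, if_pos hxt]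
      exact hc.adj_natCast (i + x)
    · rw [arcSplice_of_ge hj hxt, arcSplice_of_ge hj (by omega),
        show x + 1 - t = x - t + 1 by omega]
      exact q.adj_getVert_succ (by omega)
  · rw [hx₁, Nat.mod_self, arcSplice_of_ge hj (by omega), arcSplice, if_pos (by omega)]
    have := q.adj_getVert_succ (i := q.length - 1) (by omega)
    rwa [show q.length - 1 + 1 = q.length by omega, Walk.getVert_length,
      ← show x - t = q.length - 1 by omega] at this

theorem isEmbCircuit_arcSplice (ht : 0 < t) (hq0 : 0 < q.length) (hlen : t + q.length ≤ n) :
    IsEmbCircuit G (t + q.length) (fun r => arcSplice c i t q r.val) := by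
  have : NeZero (t + q.length) := ⟨by omega⟩
  have : Fact (1 < t + q.length) := ⟨by omega⟩
  refine ⟨by omega, fun r s hrs => ZMod.val_injective _ ?_, fun r => ?_⟩
  · exact hc.arcSplice_injOn hj hq hoff (by omega) r.val_lt s.val_lt hrs
  · show G.Adj (arcSplice c i t q r.val) (arcSplice c i t q (r + 1).val)
    rw [ZMod.val_add, ZMod.val_one]
    exact hc.adj_arcSplice hj ht hq0 r.val_lt

end Splice

theorem exists_isDetour (hc : IsEmbCircuit G n c) (hconn : G.Connected) (hn : ¬ IsIEC G n c) :
    ∃ (P Q : ℕ) (p : G.Walk (c P) (c Q)), IsDetour c p := by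
  have : NeZero n := ⟨by have := hc.1; omega⟩
  obtain ⟨i, j, hij⟩ : ∃ i j : ZMod n, G.dist (c i) (c j) ≠ min (j - i).val (i - j).val := by
    by_contra! h
    exact hn ⟨hc, h⟩
  have ei : c i = c (i.val : ℕ) := by rw [ZMod.natCast_zmod_val]
  have ej : c j = c (j.val : ℕ) := by rw [ZMod.natCast_zmod_val]
  rw [ZMod.min_val_sub_val_sub, ei, ej] at hij
  have hle : G.dist (c i.val) (c j.val) ≤ j.val - i.val + (i.val - j.val) ∧
      G.dist (c i.val) (c j.val) ≤ n - (j.val - i.val + (i.val - j.val)) := by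
    rcases le_total i.val j.val with h | h
    · have := hc.dist_le_arcs hconn h j.val_lt
      omega
    · have := hc.dist_le_arcs hconn h i.val_lt
      rw [G.dist_comm] at this
      omega
  exact exists_isDetour_of_dist_lt hconn i.val_lt j.val_lt (by omega) (by omega)

end IsEmbCircuit

/-- The hypotheses of the theorem, with `c 0 = 1`, `c (m + 2) = v₁`, `c (m + 1) = v₂` and
`c m = v₃`. -/
structure MinimalWideCircuit (G : SimpleGraph V) (m : ℕ) (c : ZMod (m + 3) → V) : Prop where
  geodetic : IsGeodetic G
  isEmbCircuit : IsEmbCircuit G (m + 3) c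
  minimal : ∀ (m' : ℕ) (c' : ZMod m' → V), IsEmbCircuit G m' c' →
    (∃ i j : ZMod m', 3 ≤ G.dist (c' i) (c' j)) → m + 3 ≤ m'
  dist_zero_m : G.dist (c (0 : ℕ)) (c m) = 3

namespace MinimalWideCircuit

variable {m : ℕ} {c : ZMod (m + 3) → V} (h : MinimalWideCircuit G m c)
include h

lemma connected : G.Connected :=
  have : Nonempty V := ⟨c 0⟩
  h.geodetic.connected

lemma three_le : 3 ≤ m := by
  have := (h.isEmbCircuit.dist_le_arcs h.connected (Nat.zero_le m) (by omega)).1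
  rw [h.dist_zero_m] at this
  omega

lemma ne {a b : ℕ} (ha : a < m + 3) (hb : b < m + 3) (hab : a ≠ b) : c a ≠ c b :=
  h.isEmbCircuit.natCast_ne ha hb hab

lemma adj_of_eq_succ {a b : ℕ} (hb : b = a + 1) : G.Adj (c a) (c b) :=
  hb ▸ h.isEmbCircuit.adj_natCast a

lemma adj_last_zero : G.Adj (c (m + 2 : ℕ)) (c (0 : ℕ)) := by
  simpa [ZMod.natCast_eq_of_eq_add (show m + 2 + 1 = 0 + (m + 3) by omega)] using
    h.isEmbCircuit.adj_natCast (m + 2)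

lemma three_le_dist_one_m : 3 ≤ G.dist (c (1 : ℕ)) (c m) := by
  by_contra! hlt
  have := h.three_le
  refine h.ne (a := 1) (b := m + 2) (by omega) (by omega) (by omega) <|
    h.geodetic.eq_of_dist_le_two (u := c m) (v := c (0 : ℕ)) (by rw [G.dist_comm, h.dist_zero_m])
      (h.adj_of_eq_succ rfl) (h.adj_of_eq_succ rfl) h.adj_last_zero
      (h.adj_of_eq_succ rfl).symm (by rw [G.dist_comm]; omega)

lemma three_le_dist_zero_pred : 3 ≤ G.dist (c (0 : ℕ)) (c (m - 1 : ℕ)) := by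
  by_contra! hlt
  have := h.three_le
  refine h.ne (a := m - 1) (b := m + 1) (by omega) (by omega) (by omega) <|
    h.geodetic.eq_of_dist_le_two h.dist_zero_m h.adj_last_zero.symm
      (h.adj_of_eq_succ rfl).symm (h.adj_of_eq_succ rfl).symm (h.adj_of_eq_succ (by omega))
      (by omega)

/-- The spliced circuit is shorter than `c`, so by minimality it has diameter at most two. -/
lemma dist_le_two_of_splice {i t j : ℕ} (hj : ((i + t : ℕ) : ZMod (m + 3)) = j)
    {q : G.Walk (c j) (c i)} (hq : q.IsPath)
    (hoff : ∀ l, 0 < l → l < q.length → q.getVert l ∉ Set.range c)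
    (ht : 0 < t) (hlen : t + q.length < m + 3) {s₁ s₂ : ℕ} (hs₁ : s₁ ≤ t) (hs₂ : s₂ ≤ t) :
    G.dist (c (i + s₁ : ℕ)) (c (i + s₂ : ℕ)) ≤ 2 := by
  have hq0 : 0 < q.length := by
    by_contra! h0
    have hji : c (i + t : ℕ) = c (i + 0 : ℕ) := by
      simpa [hj] using q.eq_of_length_eq_zero (by omega)
    have := h.isEmbCircuit.eq_of_apply_add_eq (by omega) (by omega) hji
    omega
  by_contra! hfar
  have := h.minimal _ _ (h.isEmbCircuit.isEmbCircuit_arcSplice hj hq hoff ht hq0 hlen.le)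
    ⟨s₁, s₂, ?_⟩
  · omega
  · simp only [ZMod.val_cast_of_lt (show s₁ < t + q.length by omega),
      ZMod.val_cast_of_lt (show s₂ < t + q.length by omega), arcSplice, if_pos hs₁, if_pos hs₂]
    omega

lemma dist_le_two_of_isDetour {P Q : ℕ} {p : G.Walk (c P) (c Q)} (hp : IsDetour c p) :
    (∀ a b, P ≤ a → a ≤ Q → P ≤ b → b ≤ Q → G.dist (c a) (c b) ≤ 2) ∧
    (∀ a b, a < m + 3 → b < m + 3 → (a ≤ P ∨ Q ≤ a) → (b ≤ P ∨ Q ≤ b) →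
      G.dist (c a) (c b) ≤ 2) := by
  obtain ⟨hQ, hpath, hoff, h₁, h₂⟩ := hp
  constructor
  · intro a b ha ha' hb hb'
    have hoff' : ∀ l, 0 < l → l < p.reverse.length → p.reverse.getVert l ∉ Set.range c := by
      intro l hl hl'
      rw [Walk.length_reverse] at hl'
      rw [Walk.getVert_reverse]
      exact hoff _ (by omega) (by omega)
    have := h.dist_le_two_of_splice (i := P) (t := Q - P) (by rw [Nat.add_sub_cancel' (by omega)])
      hpath.reverse hoff' (by omega) (by simp; omega) (s₁ := a - P) (s₂ := b - P)
      (by omega) (by omega)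
    rwa [Nat.add_sub_cancel' ha, Nat.add_sub_cancel' hb] at this
  · have hpos : ∀ a, a < m + 3 → (a ≤ P ∨ Q ≤ a) →
        ∃ s ≤ m + 3 - (Q - P), c (Q + s : ℕ) = c a := by
      rintro a ha (ha' | ha')
      · exact ⟨a + (m + 3) - Q, by omega,
          by rw [ZMod.natCast_eq_of_eq_add (show Q + (a + (m + 3) - Q) = a + (m + 3) by omega)]⟩
      · exact ⟨a - Q, by omega, by rw [Nat.add_sub_cancel' ha']⟩
    intro a b ha hb ha' hb'
    obtain ⟨s₁, hs₁, e₁⟩ := hpos a ha ha'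
    obtain ⟨s₂, hs₂, e₂⟩ := hpos b hb hb'
    rw [← e₁, ← e₂]
    exact h.dist_le_two_of_splice (i := Q) (t := m + 3 - (Q - P))
      (ZMod.natCast_eq_of_eq_add (by omega)) hpath hoff (by omega) (by omega) hs₁ hs₂

/-- Neither spliced circuit contains both ends of one of the pairs `(0, m)`, `(1, m)`,
`(0, m - 1)`, which are at distance at least three. -/
lemma isDetour_positions {P Q : ℕ} {p : G.Walk (c P) (c Q)} (hp : IsDetour c p) :
    2 ≤ P ∧ P ≤ m - 2 ∧ m + 1 ≤ Q := by
  obtain ⟨S₁, S₂⟩ := h.dist_le_two_of_isDetour hp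
  have hQ := hp.1
  have h₁ := hp.2.2.2.1
  have h0m := h.dist_zero_m
  have h1m := h.three_le_dist_one_m
  have h0m' := h.three_le_dist_zero_pred
  have hm := h.three_le
  have hPQ : P < m ∧ m < Q := by
    by_contra
    have := S₂ 0 m (by omega) (by omega) (by omega) (by omega)
    omega
  refine ⟨?_, ?_, by omega⟩
  · by_contra
    rcases (by omega : P = 0 ∨ P = 1) with rfl | rfl
    · have := S₁ 0 m le_rfl (by omega) (by omega) (by omega)
      omega
    · have := S₁ 1 m le_rfl (by omega) (by omega) (by omega)
      omega
  · by_contra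
    have := S₂ 0 (m - 1) (by omega) (by omega) (by omega) (by omega)
    omega

lemma adj_cases_of_lt {a b : ℕ} (hab : a < b) (hb : b < m + 3) (hadj : G.Adj (c a) (c b)) :
    b = a + 1 ∨ (a = 0 ∧ b = m + 2) ∨ (2 ≤ a ∧ a ≤ m - 2 ∧ m + 1 ≤ b) := by
  by_contra hne
  have := h.isDetour_positions (h.isEmbCircuit.isDetour_of_adj (by omega) hb (by omega) hadj)
  omega

lemma adj_cases {a b : ℕ} (ha : a < m + 3) (hb : b < m + 3) (hadj : G.Adj (c a) (c b)) :
    b = a + 1 ∨ a = b + 1 ∨ (a = 0 ∧ b = m + 2) ∨ (b = 0 ∧ a = m + 2) ∨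
      (2 ≤ a ∧ a ≤ m - 2 ∧ m + 1 ≤ b) ∨ (2 ≤ b ∧ b ≤ m - 2 ∧ m + 1 ≤ a) := by
  rcases lt_trichotomy a b with hab | rfl | hab
  · have := h.adj_cases_of_lt hab hb hadj
    omega
  · exact absurd rfl hadj.ne
  · have := h.adj_cases_of_lt hab ha hadj.symm
    omega

lemma exists_circuit_common_neighbor {a b : ℕ} (hab : a + 2 < b) (hb : b < m + 3)
    (hba : b < a + m + 1) (hle : G.dist (c a) (c b) ≤ 2)
    (hpos : ¬ (2 ≤ a ∧ a ≤ m - 2 ∧ m + 1 ≤ b)) :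
    ∃ r < m + 3, G.Adj (c a) (c r) ∧ G.Adj (c r) (c b) := by
  have hd : G.dist (c a) (c b) = 2 := by
    have h₀ : G.dist (c a) (c b) ≠ 0 := dist_ne_zero_iff_ne_and_reachable.mpr
      ⟨h.ne (by omega) hb (by omega), h.connected.preconnected _ _⟩
    have h₁ : G.dist (c a) (c b) ≠ 1 := fun h₁ => by
      have := h.adj_cases_of_lt (by omega) hb (dist_eq_one_iff_adj.mp h₁)
      omega
    omega
  obtain ⟨z, hz₁, hz₂⟩ := exists_adj_adj_of_dist_eq_two hd
  by_cases hz : z ∈ Set.range c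
  · obtain ⟨r, hr, rfl⟩ := exists_natCast_of_mem_range hz
    exact ⟨r, hr, hz₁, hz₂⟩
  · exact absurd (h.isDetour_positions
      (h.isEmbCircuit.isDetour_of_adj_adj hab hb (by omega) hz hz₁ hz₂)) hpos

/-- Otherwise `c 2, c 3, c 7, c 6` would be a 4-cycle. -/
lemma not_adj_three_m_add_two_of_eq_five (hm : m = 5) (had : G.Adj (c (2 : ℕ)) (c (m + 1 : ℕ))) :
    ¬ G.Adj (c (3 : ℕ)) (c (m + 2 : ℕ)) := by
  subst hm
  intro h37
  have h27 : ¬ G.Adj (c (2 : ℕ)) (c (7 : ℕ)) := fun h27 =>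
    h.ne (a := 1) (b := 7) (by omega) (by omega) (by omega) <|
      h.geodetic.eq_of_adj_of_adj (u := c (0 : ℕ)) (v := c (2 : ℕ))
        (h.ne (by omega) (by omega) (by omega))
        (fun h02 => by have := h.adj_cases_of_lt (by omega) (by omega) h02; omega)
        (h.adj_of_eq_succ rfl) (h.adj_of_eq_succ rfl) h.adj_last_zero.symm h27.symm
  exact h.ne (a := 3) (b := 6) (by omega) (by omega) (by omega) <|
    h.geodetic.eq_of_adj_of_adj (h.ne (by omega) (by omega) (by omega)) h27
      (h.adj_of_eq_succ rfl) h37 had (h.adj_of_eq_succ rfl)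

lemma not_adj_two_m_succ_of_eq_five (hm : m = 5) : ¬ G.Adj (c (2 : ℕ)) (c (m + 1 : ℕ)) := by
  intro had
  have h37 := h.not_adj_three_m_add_two_of_eq_five hm had
  subst hm
  have h04 : 3 ≤ G.dist (c (0 : ℕ)) (c (4 : ℕ)) := h.three_le_dist_zero_pred
  have h04' := (h.isEmbCircuit.dist_le_arcs h.connected (Nat.zero_le 4) (by omega)).1
  rcases (by omega : G.dist (c (0 : ℕ)) (c (4 : ℕ)) = 4 ∨
      G.dist (c (0 : ℕ)) (c (4 : ℕ)) = 3) with hd | hd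
  · have := congrArg (Walk.getVert · 1) <| h.geodetic.eq_of_length_eq_dist
      (p := .cons (h.adj_of_eq_succ rfl) (.cons (h.adj_of_eq_succ rfl)
        (.cons (h.adj_of_eq_succ rfl) (.cons (h.adj_of_eq_succ (b := 4) rfl) .nil))))
      (q := .cons h.adj_last_zero.symm (.cons (h.adj_of_eq_succ (a := 6) rfl).symm
        (.cons (h.adj_of_eq_succ rfl).symm (.cons (h.adj_of_eq_succ (a := 4) rfl).symm .nil))))
      (by rw [hd]; rfl) (by rw [hd]; rfl)
    exact h.ne (a := 1) (b := 7) (by omega) (by omega) (by omega) (by simpa using this)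
  obtain ⟨x, y, hx, hxy, hy⟩ := exists_adj_adj_adj_of_dist_eq_three hd
  by_cases hxc : x ∈ Set.range c
  · obtain ⟨r, hr, rfl⟩ := exists_natCast_of_mem_range hxc
    have hr4 : G.dist (c r) (c (4 : ℕ)) ≤ 2 := by simpa using dist_le (.cons hxy (.cons hy .nil))
    have := h.adj_cases (by omega) hr hx
    rcases (by omega : r = 1 ∨ r = 7) with rfl | rfl
    · obtain ⟨r', hr', h₁, h₂⟩ := h.exists_circuit_common_neighbor (a := 1) (b := 4)
        (by omega) (by omega) (by omega) hr4 (by omega)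
      have := h.adj_cases (by omega) hr' h₁
      have := h.adj_cases hr' (by omega) h₂
      omega
    · obtain ⟨r', hr', h₁, h₂⟩ := h.exists_circuit_common_neighbor (a := 4) (b := 7)
        (by omega) (by omega) (by omega) (by rwa [G.dist_comm]) (by omega)
      have := h.adj_cases (by omega) hr' h₁
      have := h.adj_cases hr' (by omega) h₂
      obtain rfl : r' = 3 := by omega
      exact h37 h₂
  by_cases hyc : y ∈ Set.range c
  · obtain ⟨r, hr, rfl⟩ := exists_natCast_of_mem_range hyc
    have := h.adj_cases hr (by omega) hy
    rcases (by omega : r = 3 ∨ r = 5) with rfl | rfl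
    · have := h.isDetour_positions
        (h.isEmbCircuit.isDetour_of_adj_adj (a := 0) (b := 3) (by omega) (by omega) (by omega)
          hxc hx hxy)
      omega
    · have := h.dist_zero_m
      have : G.dist (c (0 : ℕ)) (c (5 : ℕ)) ≤ 2 := by
        simpa using dist_le (.cons hx (.cons hxy .nil))
      omega
  have hpath : (Walk.cons hx (.cons hxy (.cons hy .nil))).IsPath := by
    have := hxy.ne
    have : c (0 : ℕ) ≠ x := fun e => hxc ⟨_, e⟩
    have : c (0 : ℕ) ≠ y := fun e => hyc ⟨_, e⟩
    have : x ≠ c (4 : ℕ) := fun e => hxc ⟨_, e.symm⟩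
    have : y ≠ c (4 : ℕ) := fun e => hyc ⟨_, e.symm⟩
    have := h.ne (a := 0) (b := 4) (by omega) (by omega) (by omega)
    simp_all
  have := h.isDetour_positions (p := .cons hx (.cons hxy (.cons hy .nil)))
    ⟨by omega, hpath, fun l hl hl' => ?_, by simp, by simp⟩
  · omega
  · simp only [Walk.length_cons, Walk.length_nil] at hl'
    rcases (by omega : l = 1 ∨ l = 2) with rfl | rfl
    · simpa using hxc
    · simpa using hyc

lemma not_adj_two_m_succ : ¬ G.Adj (c (2 : ℕ)) (c (m + 1 : ℕ)) := by
  intro had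
  have hm := h.three_le
  have hm4 : 4 ≤ m := by
    have := h.adj_cases_of_lt (by omega : 2 < m + 1) (by omega) had
    omega
  rcases (by omega : m = 4 ∨ m = 5 ∨ 6 ≤ m) with hm | hm | hm
  · refine h.ne (a := 3) (b := m + 1) (by omega) (by omega) (by omega) <|
      h.geodetic.eq_of_adj_of_adj (u := c (2 : ℕ)) (v := c (4 : ℕ))
        (h.ne (by omega) (by omega) (by omega))
        (fun h24 => by have := h.adj_cases_of_lt (by omega) (by omega) h24; omega)
        (h.adj_of_eq_succ rfl) (h.adj_of_eq_succ rfl) had (h.adj_of_eq_succ (by omega)).symm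
  · exact h.not_adj_two_m_succ_of_eq_five hm had
  · obtain ⟨S₁, -⟩ :=
      h.dist_le_two_of_isDetour
        (h.isEmbCircuit.isDetour_of_adj (by omega) (by omega) (by omega) had)
    obtain ⟨r, hr, h₁, h₂⟩ := h.exists_circuit_common_neighbor (a := 2) (b := m - 1) (by omega)
      (by omega) (by omega) (S₁ 2 (m - 1) le_rfl (by omega) (by omega) (by omega)) (by omega)
    have := h.adj_cases (by omega) hr h₁
    have := h.adj_cases hr (by omega) h₂
    omega

lemma not_adj_m_succ {s : ℕ} (hs : 2 ≤ s) (hs' : s ≤ m - 2) :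
    ¬ G.Adj (c s) (c (m + 1 : ℕ)) := by
  intro had
  have hm := h.three_le
  obtain ⟨-, S₂⟩ :=
    h.dist_le_two_of_isDetour (h.isEmbCircuit.isDetour_of_adj (by omega) (by omega) (by omega) had)
  obtain ⟨r, hr, h₁, h₂⟩ := h.exists_circuit_common_neighbor (a := 1) (b := m + 1) (by omega)
    (by omega) (by omega) (S₂ 1 (m + 1) (by omega) (by omega) (by omega) (by omega)) (by omega)
  have := h.adj_cases (by omega) hr h₁
  have := h.adj_cases hr (by omega) h₂
  obtain rfl : r = 2 := by omega
  exact h.not_adj_two_m_succ h₂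

lemma eq_of_adj_last {P : ℕ} (hP : 2 ≤ P) (hP' : P ≤ m - 2)
    (had : G.Adj (c P) (c (m + 2 : ℕ))) : P = m - 2 := by
  by_contra hne
  have hm := h.three_le
  obtain ⟨S₁, -⟩ :=
    h.dist_le_two_of_isDetour (h.isEmbCircuit.isDetour_of_adj (by omega) (by omega) (by omega) had)
  obtain ⟨r, hr, h₁, h₂⟩ := h.exists_circuit_common_neighbor (a := P) (b := m) (by omega)
    (by omega) (by omega) (S₁ P m le_rfl (by omega) (by omega) (by omega)) (by omega)
  have := h.adj_cases (by omega) hr h₁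
  have := h.adj_cases hr (by omega) h₂
  obtain rfl : r = m + 1 := by omega
  exact h.not_adj_m_succ hP hP' h₁

lemma eq_five_of_chord
    (hchord : ∃ P Q, 2 ≤ P ∧ P ≤ m - 2 ∧ m + 1 ≤ Q ∧ Q < m + 3 ∧ G.Adj (c P) (c Q)) :
    m = 5 ∧ G.Adj (c (3 : ℕ)) (c (m + 2 : ℕ)) := by
  obtain ⟨P, Q, hP, hP', hQ, hQ', had⟩ := hchord
  rcases (by omega : Q = m + 1 ∨ Q = m + 2) with rfl | rfl
  · exact absurd had (h.not_adj_m_succ hP hP')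
  obtain rfl := h.eq_of_adj_last hP hP' had
  rcases (by omega : m = 4 ∨ 5 ≤ m) with hm | hm
  · refine absurd (h.geodetic.eq_of_adj_of_adj (u := c (0 : ℕ)) (v := c (2 : ℕ))
      (h.ne (by omega) (by omega) (by omega))
      (fun h02 => by have := h.adj_cases_of_lt (by omega) (by omega) h02; omega)
      (h.adj_of_eq_succ rfl) (h.adj_of_eq_succ rfl) h.adj_last_zero.symm
      (by convert had.symm using 3; omega)) (h.ne (by omega) (by omega) (by omega))
  obtain ⟨-, S₂⟩ :=
    h.dist_le_two_of_isDetour (h.isEmbCircuit.isDetour_of_adj (by omega) (by omega) (by omega) had)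
  obtain ⟨r, hr, h₁, h₂⟩ := h.exists_circuit_common_neighbor (a := 0) (b := 3) (by omega)
    (by omega) (by omega) (S₂ 0 3 (by omega) (by omega) (by omega) (by omega)) (by omega)
  have := h.adj_cases (by omega) hr h₁
  have := h.adj_cases hr (by omega) h₂
  obtain rfl : r = m + 2 := by omega
  have := h.eq_of_adj_last (by omega) (by omega) h₂.symm
  exact ⟨by omega, h₂.symm⟩

lemma ne_four_of_isDetour {P Q : ℕ} {p : G.Walk (c P) (c Q)} (hp : IsDetour c p) : m ≠ 4 := by
  intro hm
  obtain ⟨hP, hP', hQ'⟩ := h.isDetour_positions hp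
  obtain ⟨S₁, S₂⟩ := h.dist_le_two_of_isDetour hp
  have hQ := hp.1
  rcases (by omega : Q = 5 ∨ Q = 6) with rfl | rfl
  · have h14 : G.dist (c (1 : ℕ)) (c (4 : ℕ)) = 3 := by
      have := (h.isEmbCircuit.dist_le_arcs h.connected (show 1 ≤ 4 by omega) (by omega)).1
      have : 3 ≤ G.dist (c (1 : ℕ)) (c (4 : ℕ)) := hm ▸ h.three_le_dist_one_m
      omega
    exact h.ne (a := 5) (b := 3) (by omega) (by omega) (by omega) <|
      h.geodetic.eq_of_dist_le_two h14 (h.adj_of_eq_succ rfl) (h.adj_of_eq_succ rfl)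
        (h.adj_of_eq_succ rfl) (h.adj_of_eq_succ (by omega)).symm
        (S₂ 1 5 (by omega) (by omega) (by omega) (by omega))
  · have h30 : G.dist (c (3 : ℕ)) (c (0 : ℕ)) = 3 := by
      have := (h.isEmbCircuit.dist_le_arcs h.connected (show 0 ≤ 3 by omega) (by omega)).1
      have : 3 ≤ G.dist (c (0 : ℕ)) (c (3 : ℕ)) := hm ▸ h.three_le_dist_zero_pred
      rw [G.dist_comm]
      omega
    exact h.ne (a := 6) (b := 1) (by omega) (by omega) (by omega) <|
      h.geodetic.eq_of_dist_le_two h30 (h.adj_of_eq_succ rfl).symm (h.adj_of_eq_succ rfl).symm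
        (h.adj_of_eq_succ rfl).symm (by convert h.adj_last_zero using 3; omega)
        (S₁ 3 6 (by omega) (by omega) (by omega) le_rfl)

lemma exists_chord (hIEC : ∀ (k : ℕ) (c' : ZMod k → V), IsIEC G k c' → k ≤ 5) :
    ∃ P Q, 2 ≤ P ∧ P ≤ m - 2 ∧ m + 1 ≤ Q ∧ Q < m + 3 ∧ G.Adj (c P) (c Q) := by
  by_contra hno
  have hm := h.three_le
  have hcons : ∀ a b, a < m + 3 → b < m + 3 → G.Adj (c a) (c b) →
      b = a + 1 ∨ a = b + 1 ∨ (a = 0 ∧ b = m + 2) ∨ (b = 0 ∧ a = m + 2) := by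
    intro a b ha hb hadj
    have := h.adj_cases ha hb hadj
    have : ¬ (2 ≤ a ∧ a ≤ m - 2 ∧ m + 1 ≤ b) := fun hab =>
      hno ⟨a, b, hab.1, hab.2.1, hab.2.2, hb, hadj⟩
    have : ¬ (2 ≤ b ∧ b ≤ m - 2 ∧ m + 1 ≤ a) := fun hba =>
      hno ⟨b, a, hba.1, hba.2.1, hba.2.2, ha, hadj.symm⟩
    omega
  obtain ⟨P, Q, p, hp⟩ :=
    h.isEmbCircuit.exists_isDetour h.connected fun hI => by have := hIEC _ c hI; omega
  obtain ⟨hP, hP', hQ'⟩ := h.isDetour_positions hp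
  obtain ⟨S₁, S₂⟩ := h.dist_le_two_of_isDetour hp
  have hQ := hp.1
  have := h.ne_four_of_isDetour hp
  rcases (by omega : P = 2 ∨ 3 ≤ P) with rfl | hP3
  · obtain ⟨r, hr, h₁, h₂⟩ := h.exists_circuit_common_neighbor (a := 2) (b := m) (by omega)
      (by omega) (by omega) (S₁ 2 m le_rfl (by omega) (by omega) (by omega)) (by omega)
    have := hcons _ _ (by omega) hr h₁
    have := hcons _ _ hr (by omega) h₂
    omega
  · obtain ⟨r, hr, h₁, h₂⟩ := h.exists_circuit_common_neighbor (a := 0) (b := P) (by omega)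
      (by omega) (by omega) (S₂ 0 P (by omega) (by omega) (by omega) (by omega)) (by omega)
    have := hcons _ _ (by omega) hr h₁
    have := hcons _ _ hr (by omega) h₂
    omega

end MinimalWideCircuit

end

theorem stmt5_general {V : Type*} (G : SimpleGraph V) (hG : IsGeodetic G)
    (hIEC : ∀ (k : ℕ) (c : ZMod k → V), IsIEC G k c → k ≤ 5)
    (m : ℕ) (c : ZMod (m + 3) → V) (hc : IsEmbCircuit G (m + 3) c)
    (hmin : ∀ (m' : ℕ) (c' : ZMod m' → V), IsEmbCircuit G m' c' →
      (∃ i j : ZMod m', 3 ≤ G.dist (c' i) (c' j)) → m + 3 ≤ m')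
    (hgeo : G.dist (c 0) (c (m : ZMod (m + 3))) = 3) :
    m = 5 ∧ G.dist (c 0) (c 1) = 1 ∧ G.dist (c 0) (c 2) = 2 ∧ G.dist (c 0) (c 3) = 2 ∧
      G.dist (c 0) (c 4) = 3 ∧ G.dist (c 3) (c ((m + 2 : ℕ) : ZMod (m + 3))) = 1 := by
  have h : MinimalWideCircuit G m c := ⟨hG, hc, hmin, by simpa using hgeo⟩
  obtain ⟨rfl, h37⟩ := h.eq_five_of_chord (h.exists_chord hIEC)
  have h01 : G.Adj (c (0 : ℕ)) (c (1 : ℕ)) := h.adj_of_eq_succ rfl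
  have h02 : G.dist (c (0 : ℕ)) (c (2 : ℕ)) = 2 :=
    dist_eq_two_of_adj_of_adj (h.ne (by omega) (by omega) (by omega))
      (fun h02 => by have := h.adj_cases_of_lt (by omega) (by omega) h02; omega)
      h01 (h.adj_of_eq_succ rfl)
  have h03 : G.dist (c (0 : ℕ)) (c (3 : ℕ)) = 2 :=
    dist_eq_two_of_adj_of_adj (h.ne (by omega) (by omega) (by omega))
      (fun h03 => by have := h.adj_cases_of_lt (by omega) (by omega) h03; omega)
      h.adj_last_zero.symm h37.symm
  have h04 : G.dist (c (0 : ℕ)) (c (4 : ℕ)) = 3 :=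
    le_antisymm ((dist_le (.cons h.adj_last_zero.symm (.cons h37.symm
      (.cons (h.adj_of_eq_succ (b := 4) rfl) .nil)))).trans_eq rfl) h.three_le_dist_zero_pred
  refine ⟨rfl, ?_, ?_, ?_, ?_, ?_⟩
  · simpa using dist_eq_one_iff_adj.mpr h01
  · simpa using h02
  · simpa using h03
  · simpa using h04
  · simpa using dist_eq_one_iff_adj.mpr h37

theorem stmt5 {V : Type*} (G : SimpleGraph V) (hG : IsGeodetic G)
    (hIEC : ∀ (k : ℕ) (c : ZMod k → V), IsIEC G k c → k ≤ 5)
    (m : ℕ) (c : ZMod (m + 3) → V) (hc : IsEmbCircuit G (m + 3) c)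
    (hdiam : ∃ i j : ZMod (m + 3), 3 ≤ G.dist (c i) (c j))
    (hmin : ∀ (m' : ℕ) (c' : ZMod m' → V), IsEmbCircuit G m' c' →
      (∃ i j : ZMod m', 3 ≤ G.dist (c' i) (c' j)) → m + 3 ≤ m')
    (hgeo : G.dist (c 0) (c (m : ZMod (m + 3))) = 3) :
    m = 5 ∧ G.dist (c 0) (c 1) = 1 ∧ G.dist (c 0) (c 2) = 2 ∧ G.dist (c 0) (c 3) = 2 ∧
      G.dist (c 0) (c 4) = 3 ∧ G.dist (c 3) (c ((m + 2 : ℕ) : ZMod (m + 3))) = 1 :=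
  stmt5_general G hG hIEC m c hc hmin hgeo
end

section
/- Every plain group admits a presentation by a finite convergent length-reducing rewriting system (Σ, T) with Σ = Σ^{-1} in which the left-hand side of every rule has length exactly two. -/
/-- One-step rewriting: replace a factor which is a left-hand side of a rule. -/
def RWStep {α : Type*} (T : Set (FreeMonoid α × FreeMonoid α)) (u v : FreeMonoid α) : Prop :=
  ∃ x y l r, (l, r) ∈ T ∧ u = x * l * y ∧ v = x * r * y

/-- Reflexive-transitive closure of one-step rewriting. -/
def RWReduces {α : Type*} (T : Set (FreeMonoid α × FreeMonoid α)) :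
    FreeMonoid α → FreeMonoid α → Prop :=
  Relation.ReflTransGen (RWStep T)

/-- Terminating: no infinite chain of immediate reductions. -/
def RWTerminating {α : Type*} (T : Set (FreeMonoid α × FreeMonoid α)) : Prop :=
  ¬ ∃ f : ℕ → FreeMonoid α, ∀ n : ℕ, RWStep T (f n) (f (n + 1))

/-- Confluent rewriting system. -/
def RWConfluent {α : Type*} (T : Set (FreeMonoid α × FreeMonoid α)) : Prop :=
  ∀ w x y, RWReduces T w x → RWReduces T w y →
    ∃ z, RWReduces T x z ∧ RWReduces T y z

/-- Length-reducing: every rule strictly decreases length. -/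
def RWLengthReducing {α : Type*} (T : Set (FreeMonoid α × FreeMonoid α)) : Prop :=
  ∀ p ∈ T, (Prod.snd p).length < (Prod.fst p).length

/-- A word is irreducible if no rewriting step applies to it. -/
def RWIrreducible {α : Type*} (T : Set (FreeMonoid α × FreeMonoid α)) (u : FreeMonoid α) : Prop :=
  ∀ v, ¬ RWStep T u v

/-- The congruence on `Σ*` generated by the rewriting rules. -/
def RWCon {α : Type*} (T : Set (FreeMonoid α × FreeMonoid α)) : Con (FreeMonoid α) :=
  conGen (RWStep T)

/-- The monoid presented by the rewriting system `(Σ, T)`. -/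
abbrev RWMonoid {α : Type*} (T : Set (FreeMonoid α × FreeMonoid α)) :=
  (RWCon T).Quotient

/-- The class of a word in the presented monoid. -/
def RWclass {α : Type*} (T : Set (FreeMonoid α × FreeMonoid α)) (w : FreeMonoid α) :
    RWMonoid T :=
  Con.mk' (RWCon T) w

/-- A group is plain if it is isomorphic to a free product of finitely many groups,
each of which is finite or infinite cyclic. -/
def IsPlainGroup (G : Type u) [Group G] : Prop :=
  ∃ (ι : Type) (H : ι → Type u) (hH : ∀ i, Group (H i)),
    letI := hH
    Finite ι ∧ (∀ i, Finite (H i) ∨ Nonempty (H i ≃* Multiplicative ℤ)) ∧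
      Nonempty (G ≃* Monoid.CoprodI H)



open Monoid

/-- Local data for presenting one factor group `M`. -/
structure LocSys (M : Type u) [Group M] : Type (u + 1) where
  n : ℕ
  g : Fin n → M
  inj : Function.Injective g
  inv : Fin n → Fin n
  hinv : ∀ x, g (inv x) = (g x)⁻¹
  tab : Fin n → Fin n → Option (Option (Fin n))
  t0 : ∀ x y, tab x y = some none ↔ g x * g y = 1
  t1 : ∀ x y z, tab x y = some (some z) ↔ g x * g y = g z
  compat : ∀ x y z, tab x y = some (some z) → ∀ w, (tab y w = none ↔ tab z w = none)
  gen : ∀ m : M, m ∈ Submonoid.closure (Set.range g)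
  lift : ∀ {N : Type} [Monoid N] (f : Fin n → N),
    (∀ x y, tab x y = some none → f x * f y = 1) →
    (∀ x y z, tab x y = some (some z) → f x * f y = f z) →
    (∀ x, f x * f (inv x) = 1) →
    ∃ φ : M →* N, ∀ x, φ (g x) = f x

noncomputable def locFinite (M : Type u) [Group M] [Fintype M] [DecidableEq M] : LocSys M := by
  classical
  let e : Fin (Fintype.card {m : M // m ≠ 1}) ≃ {m : M // m ≠ 1} := (Fintype.equivFin _).symm
  refine
  { n := Fintype.card {m : M // m ≠ 1}
    g := fun x => (e x).1
    inj := fun x y h => e.injective (Subtype.ext h)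
    inv := fun x => e.symm ⟨((e x).1)⁻¹, by simp [(e x).2]⟩
    hinv := fun x => by simp
    tab := fun x y => if h : (e x).1 * (e y).1 = 1 then some none
      else some (some (e.symm ⟨(e x).1 * (e y).1, h⟩))
    t0 := fun x y => by split <;> simp_all
    t1 := fun x y z => by
      split <;> rename_i h
      · simp only [Option.some.injEq]
        constructor
        · intro hc; cases hc
        · intro hz; exact ((e z).2 (hz.symm.trans h)).elim
      · constructor
        · intro hc
          have := Option.some.inj (Option.some.inj hc)
          rw [← this]; simp
        · intro hz
          have : e.symm ⟨(e x).1 * (e y).1, h⟩ = z := by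
            apply e.injective; rw [e.apply_symm_apply]; exact Subtype.ext hz
          rw [this]
    compat := fun x y z h w => by
      constructor <;> intro hc <;> exact absurd hc (by split <;> simp)
    gen := fun m => by
      by_cases h : m = 1
      · rw [h]; exact one_mem _
      · exact Submonoid.subset_closure ⟨e.symm ⟨m, h⟩, by simp⟩
    lift := ?_ }
  intro N _ f h0 h1 h3
  set F : M → N := fun m => if h : m = 1 then 1 else f (e.symm ⟨m, h⟩) with hF
  have hFg : ∀ x, F ((e x).1) = f x := fun x => by
    rw [hF]; simp only [dif_neg (e x).2]
    congr 1
    simpa using e.symm_apply_apply x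
  have key : ∀ m₁ m₂ : M, F (m₁ * m₂) = F m₁ * F m₂ := by
    intro m₁ m₂
    by_cases h₁ : m₁ = 1
    · subst h₁; simp [hF]
    by_cases h₂ : m₂ = 1
    · subst h₂; simp [hF]
    set x := e.symm ⟨m₁, h₁⟩ with hx
    set y := e.symm ⟨m₂, h₂⟩ with hy
    have hgx : (e x).1 = m₁ := by rw [hx]; simp
    have hgy : (e y).1 = m₂ := by rw [hy]; simp
    by_cases h12 : m₁ * m₂ = 1
    · have hyi : y = e.symm ⟨((e x).1)⁻¹, by simp [(e x).2]⟩ := by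
        apply e.injective
        simp only [e.apply_symm_apply]
        exact Subtype.ext (eq_inv_of_mul_eq_one_right (by rw [hgx, hgy]; exact h12))
      have : f x * f y = 1 := by rw [hyi]; exact h3 x
      rw [hF]; simp only [dif_pos h12, dif_neg h₁, dif_neg h₂, ← hx, ← hy, this]
    · set z := e.symm ⟨m₁ * m₂, h12⟩ with hz
      have hgz : (e z).1 = m₁ * m₂ := by rw [hz]; simp
      have htab : (e x).1 * (e y).1 = (e z).1 := by rw [hgx, hgy, hgz]
      have hfz : f x * f y = f z := by
        apply h1
        simp only [dif_neg (show ¬ ((e x).1 * (e y).1 = 1) by rw [hgx, hgy]; exact h12)]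
        congr 1; congr 1
        apply e.injective; rw [e.apply_symm_apply]; exact Subtype.ext htab
      rw [hF]; simp only [dif_neg h12, dif_neg h₁, dif_neg h₂, ← hx, ← hy, ← hz, hfz]
  refine ⟨{ toFun := F, map_one' := by simp [hF], map_mul' := key }, ?_⟩
  intro x; exact hFg x

noncomputable def locZ (M : Type u) [Group M] (eM : M ≃* Multiplicative ℤ) : LocSys M := by
  classical
  set t : M := eM.symm (Multiplicative.ofAdd 1) with ht
  have het : Multiplicative.toAdd (eM t) = 1 := by rw [ht]; simp
  have hpow : ∀ z : ℤ, Multiplicative.toAdd (eM (t ^ z)) = z := by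
    intro z; rw [map_zpow]; simp [het]
  have hinj : ∀ z w : ℤ, t ^ z = t ^ w → z = w := by
    intro z w h
    rw [← hpow z, ← hpow w, h]
  have key : ∀ a b : ℤ, a ≠ b → t ^ a ≠ t ^ b := fun a b hab h => hab (hinj a b h)
  have e0 : t ^ (0 : ℤ) = 1 := zpow_zero t
  have e1 : t ^ (1 : ℤ) = t := zpow_one t
  have em1 : t ^ (-1 : ℤ) = t⁻¹ := by rw [zpow_neg, zpow_one]
  have e2 : t ^ (2 : ℤ) = t * t := by
    rw [(by norm_num : (2 : ℤ) = 1 + 1), zpow_add, zpow_one]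
  have em2 : t ^ (-2 : ℤ) = t⁻¹ * t⁻¹ := by
    rw [(by norm_num : (-2 : ℤ) = -1 + -1), zpow_add, em1]
  have fin2 : ∀ x : Fin 2, x = 0 ∨ x = 1 := by decide
  refine
  { n := 2
    g := ![t, t⁻¹]
    inj := ?_
    inv := ![1, 0]
    hinv := ?_
    tab := fun x y => if x = y then none else some none
    t0 := ?_
    t1 := ?_
    compat := ?_
    gen := ?_
    lift := ?_ }
  · -- inj
    intro x y h
    rcases fin2 x with hx | hx <;> rcases fin2 y with hy | hy <;> subst hx <;> subst hy <;>
      simp only [Matrix.cons_val_zero, Matrix.cons_val_one, Matrix.head_cons] at h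
    · rfl
    · exact absurd h (by simpa [e1, em1] using key 1 (-1) (by norm_num))
    · exact absurd h (by simpa [e1, em1] using key (-1) 1 (by norm_num))
    · rfl
  · -- hinv
    intro x
    rcases fin2 x with hx | hx <;> subst hx <;>
      simp only [Matrix.cons_val_zero, Matrix.cons_val_one, Matrix.head_cons]
    rw [inv_inv]
  · -- t0
    intro x y
    rcases fin2 x with hx | hx <;> rcases fin2 y with hy | hy <;> subst hx <;> subst hy <;>
      simp only [Matrix.cons_val_zero, Matrix.cons_val_one, Matrix.head_cons]
    · exact iff_of_false (by decide) (by simpa [e2, e0] using key 2 0 (by norm_num))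
    · exact iff_of_true (by decide) (mul_inv_cancel t)
    · exact iff_of_true (by decide) (inv_mul_cancel t)
    · exact iff_of_false (by decide) (by simpa [em2, e0] using key (-2) 0 (by norm_num))
  · -- t1
    intro x y z
    refine iff_of_false (by split <;> simp) ?_
    rcases fin2 x with hx | hx <;> rcases fin2 y with hy | hy <;> rcases fin2 z with hz | hz <;>
        subst hx <;> subst hy <;> subst hz <;>
      simp only [Matrix.cons_val_zero, Matrix.cons_val_one, Matrix.head_cons]
    · simpa [e2, e1] using key 2 1 (by norm_num)
    · simpa [e2, em1] using key 2 (-1) (by norm_num)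
    · rw [mul_inv_cancel t]; simpa [e0, e1] using key 0 1 (by norm_num)
    · rw [mul_inv_cancel t]; simpa [e0, em1] using key 0 (-1) (by norm_num)
    · rw [inv_mul_cancel t]; simpa [e0, e1] using key 0 1 (by norm_num)
    · rw [inv_mul_cancel t]; simpa [e0, em1] using key 0 (-1) (by norm_num)
    · simpa [em2, e1] using key (-2) 1 (by norm_num)
    · simpa [em2, em1] using key (-2) (-1) (by norm_num)
  · -- compat
    intro x y z h
    exact absurd h (by split <;> simp)
  · -- gen
    intro m
    have hm : m = t ^ (Multiplicative.toAdd (eM m)) := by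
      apply eM.injective
      apply Multiplicative.toAdd.injective
      rw [hpow]
    rw [hm]
    have htm : t ∈ Submonoid.closure (Set.range ![t, t⁻¹]) :=
      Submonoid.subset_closure ⟨0, rfl⟩
    have htm2 : t⁻¹ ∈ Submonoid.closure (Set.range ![t, t⁻¹]) :=
      Submonoid.subset_closure ⟨1, rfl⟩
    generalize Multiplicative.toAdd (eM m) = z
    rcases le_or_gt 0 z with hz | hz
    · obtain ⟨n, rfl⟩ := Int.eq_ofNat_of_zero_le hz
      rw [zpow_natCast]; exact pow_mem htm _
    · have hrw : t ^ z = (t⁻¹) ^ ((-z).toNat) := by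
        rw [inv_pow, ← zpow_natCast, Int.toNat_of_nonneg (by omega), ← zpow_neg, neg_neg]
      rw [hrw]; exact pow_mem htm2 _
  · -- lift
    intro N _ f h0 h1 h3
    have h01 : f 0 * f 1 = 1 := by simpa using h3 0
    have h10 : f 1 * f 0 = 1 := by simpa using h3 1
    set u : Nˣ := ⟨f 0, f 1, h01, h10⟩ with hu
    refine ⟨(Units.coeHom N).comp ((zpowersHom Nˣ u).comp eM.toMonoidHom), ?_⟩
    intro x
    rcases fin2 x with hx | hx <;> subst hx <;>
      simp only [Matrix.cons_val_zero, Matrix.cons_val_one, Matrix.head_cons,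
        MonoidHom.comp_apply, MulEquiv.coe_toMonoidHom, zpowersHom_apply, Units.coeHom_apply]
    · rw [het]; simp [hu]
    · have h2 : Multiplicative.toAdd (eM t⁻¹) = -1 := by rw [map_inv]; simp [het]
      rw [h2]; simp [hu]

section Global

open Monoid FreeMonoid

variable {ι : Type} [DecidableEq ι] {H : ι → Type u} [∀ i, Group (H i)]
  (L : ∀ i, LocSys (H i))

abbrev Alph := Σ i, Fin (L i).n

/-- Cross-component rule table. -/
def tab' (a b : Alph L) : Option (Option (Alph L)) :=
  if h : a.1 = b.1 then ((L b.1).tab (h ▸ a.2) b.2).map (Option.map (Sigma.mk b.1)) else none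

lemma tab'_same {i : ι} (x y : Fin (L i).n) :
    tab' L ⟨i, x⟩ ⟨i, y⟩ = ((L i).tab x y).map (Option.map (Sigma.mk i)) := dif_pos rfl

lemma tab'_diff {a b : Alph L} (h : a.1 ≠ b.1) : tab' L a b = none := dif_neg h

lemma tab'_comp {a b : Alph L} {o : Option (Alph L)} (h : tab' L a b = some o) : a.1 = b.1 := by
  by_contra hne
  rw [tab'_diff L hne] at h
  cases h

lemma mapmap_none {i : ι} {o : Option (Option (Fin (L i).n))} :
    o.map (Option.map (@Sigma.mk ι (fun j => Fin (L j).n) i)) = none ↔ o = none := Option.map_eq_none_iff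

lemma mapmap_some_none {i : ι} {o : Option (Option (Fin (L i).n))} :
    o.map (Option.map (@Sigma.mk ι (fun j => Fin (L j).n) i)) = some none ↔ o = some none := by
  cases o with
  | none => simp
  | some o' => cases o' <;> simp

lemma mapmap_some_some {i : ι} {o : Option (Option (Fin (L i).n))} {c : Alph L} :
    o.map (Option.map (@Sigma.mk ι (fun j => Fin (L j).n) i)) = some (some c) ↔
      ∃ z, o = some (some z) ∧ c = ⟨i, z⟩ := by
  cases o with
  | none => simp
  | some o' =>
    cases o' with
    | none => simp
    | some z =>
      simp only [Option.map_some, Option.some.injEq]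
      constructor
      · rintro h; exact ⟨z, rfl, h.symm⟩
      · rintro ⟨z', hz', rfl⟩; cases hz'; rfl

lemma tab'_none_iff {i : ι} {x y : Fin (L i).n} :
    tab' L ⟨i, x⟩ ⟨i, y⟩ = none ↔ (L i).tab x y = none := by
  rw [tab'_same, mapmap_none]

lemma tab'_sn_iff {i : ι} {x y : Fin (L i).n} :
    tab' L ⟨i, x⟩ ⟨i, y⟩ = some none ↔ (L i).g x * (L i).g y = 1 := by
  rw [tab'_same, mapmap_some_none, (L i).t0]

lemma tab'_ss_iff {i : ι} {x y : Fin (L i).n} {c : Alph L} :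
    tab' L ⟨i, x⟩ ⟨i, y⟩ = some (some c) ↔
      ∃ z, (L i).g x * (L i).g y = (L i).g z ∧ c = ⟨i, z⟩ := by
  rw [tab'_same, mapmap_some_some]
  constructor
  · rintro ⟨z, hz, rfl⟩; exact ⟨z, ((L i).t1 _ _ _).mp hz, rfl⟩
  · rintro ⟨z, hz, rfl⟩; exact ⟨z, ((L i).t1 _ _ _).mpr hz, rfl⟩

/-- Transfer of the `compat` axiom to the sigma alphabet. -/
lemma compat' {a b c : Alph L} (h : tab' L a b = some (some c)) (w : Alph L) :
    (tab' L b w = none ↔ tab' L c w = none) := by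
  obtain ⟨i, x⟩ := a
  obtain ⟨j, y⟩ := b
  obtain hij : i = j := tab'_comp L h
  subst hij
  obtain ⟨z, hz, rfl⟩ := (tab'_ss_iff L).mp h
  obtain ⟨k, ww⟩ := w
  by_cases hk : i = k
  · subst hk
    rw [tab'_none_iff, tab'_none_iff]
    exact (L i).compat x y z (((L i).t1 _ _ _).mpr hz) ww
  · rw [tab'_diff L hk, tab'_diff L hk]

set_option linter.unusedSectionVars false

/-- Right-hand side of a rule. -/
def rhsW : Option (Alph L) → FreeMonoid (Alph L) := fun o => o.elim 1 FreeMonoid.of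

/-- The global set of rules. -/
def Rules : Set (FreeMonoid (Alph L) × FreeMonoid (Alph L)) :=
  { p | ∃ a b o, tab' L a b = some o ∧
      p = (FreeMonoid.of a * FreeMonoid.of b, rhsW L o) }

lemma rules_finite [Finite ι] : (Rules L).Finite := by
  classical
  haveI f1 : Fintype (Alph L) := Fintype.ofFinite _
  haveI f2 : Fintype (Option (Alph L)) := instFintypeOption
  haveI f3 : Fintype (Alph L × Option (Alph L)) := instFintypeProd _ _
  haveI f4 : Fintype (Alph L × Alph L × Option (Alph L)) := instFintypeProd _ _
  have hsub : Rules L ⊆ (fun q : Alph L × Alph L × Option (Alph L) =>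
      (FreeMonoid.of q.1 * FreeMonoid.of q.2.1, rhsW L q.2.2)) '' Set.univ := by
    rintro p ⟨a, b, o, hab, rfl⟩
    exact ⟨(a, b, o), trivial, rfl⟩
  exact Set.Finite.subset (Set.finite_univ.image _) hsub

/-- Insert a letter in front of a word, performing at most one reduction. -/
def ins (a : Alph L) (u : List (Alph L)) : List (Alph L) :=
  match u with
  | [] => [a]
  | b :: v =>
    match tab' L a b with
    | none => a :: b :: v
    | some none => v
    | some (some c) => c :: v

lemma ins_nil (a : Alph L) : ins L a [] = [a] := rfl

lemma ins_cons_none {a b : Alph L} (h : tab' L a b = none) (v : List (Alph L)) :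
    ins L a (b :: v) = a :: b :: v := by simp only [ins, h]

lemma ins_cons_sn {a b : Alph L} (h : tab' L a b = some none) (v : List (Alph L)) :
    ins L a (b :: v) = v := by simp only [ins, h]

lemma ins_cons_ss {a b c : Alph L} (h : tab' L a b = some (some c)) (v : List (Alph L)) :
    ins L a (b :: v) = c :: v := by simp only [ins, h]

/-- Irreducible words. -/
def Irr (u : List (Alph L)) : Prop := List.Chain' (fun a b => tab' L a b = none) u

lemma ins_head_none {a : Alph L} {v : List (Alph L)}
    (h : ∀ b ∈ v.head?, tab' L a b = none) : ins L a v = a :: v := by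
  cases v with
  | nil => rfl
  | cons b v' => exact ins_cons_none L (h b rfl) v'

lemma irr_ins {a : Alph L} {u : List (Alph L)} (hu : Irr L u) : Irr L (ins L a u) := by
  cases u with
  | nil => exact List.isChain_singleton a
  | cons b v =>
    cases htab : tab' L a b with
    | none =>
      rw [ins_cons_none L htab]
      exact List.isChain_cons_cons.mpr ⟨htab, hu⟩
    | some o =>
      cases o with
      | none => rw [ins_cons_sn L htab]; exact hu.tail
      | some c =>
        rw [ins_cons_ss L htab]
        cases v with
        | nil => exact List.isChain_singleton c
        | cons b' v' =>
          refine List.isChain_cons_cons.mpr ⟨?_, (List.isChain_cons_cons.mp hu).2⟩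
          exact (compat' L htab b').mp (List.isChain_cons_cons.mp hu).1

/-- Normal form. -/
def nf (w : List (Alph L)) : List (Alph L) := w.foldr (ins L) []

lemma irr_nf (w : List (Alph L)) : Irr L (nf L w) := by
  induction w with
  | nil => exact List.isChain_nil
  | cons a w ih => exact irr_ins L ih

/-- The key local-confluence computation. -/
lemma ins_ins {a b : Alph L} {o : Option (Alph L)} (h : tab' L a b = some o)
    {u : List (Alph L)} (hu : Irr L u) :
    ins L a (ins L b u) = o.elim u (fun c => ins L c u) := by
  obtain ⟨i, x⟩ := a
  obtain ⟨j, y⟩ := b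
  obtain rfl : i = j := tab'_comp L h
  cases u with
  | nil =>
    rw [ins_nil]
    cases o with
    | none => exact ins_cons_sn L h []
    | some c => exact ins_cons_ss L h []
  | cons b' v =>
    cases hbb' : tab' L ⟨i, y⟩ b' with
    | none =>
      rw [ins_cons_none L hbb']
      cases o with
      | none => exact ins_cons_sn L h _
      | some c =>
        rw [ins_cons_ss L h]
        exact (ins_head_none L (fun b'' hb'' => by
          cases hb''; exact (compat' L h b').mp hbb')).symm
    | some o' =>
      obtain ⟨k, y'⟩ := b'
      obtain rfl : i = k := tab'_comp L hbb'
      cases o' with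
      | none =>
        -- g y * g y' = 1
        have hyy' : (L i).g y * (L i).g y' = 1 := (tab'_sn_iff L).mp hbb'
        rw [ins_cons_sn L hbb']
        cases o with
        | none =>
          -- g x * g y = 1, hence x = y'
          have hxy : (L i).g x * (L i).g y = 1 := (tab'_sn_iff L).mp h
          have hxeq : x = y' := by
            apply (L i).inj
            have h1 : (L i).g x = ((L i).g y)⁻¹ := eq_inv_of_mul_eq_one_left hxy
            have h2 : (L i).g y' = ((L i).g y)⁻¹ := eq_inv_of_mul_eq_one_right hyy'
            rw [h1, h2]
          subst hxeq
          simp only [Option.elim]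
          refine ins_head_none L (fun b'' hb'' => ?_)
          cases v with
          | nil => cases hb''
          | cons h' v' =>
            have hb : h' = b'' := by simpa using hb''
            cases hb
            exact (List.isChain_cons_cons.mp hu).1
        | some c =>
          obtain ⟨z, hz, rfl⟩ := (tab'_ss_iff L).mp h
          -- g z * g y' = g x
          have hzy' : (L i).g z * (L i).g y' = (L i).g x := by
            rw [← hz, mul_assoc, hyy', mul_one]
          have htab2 : tab' L ⟨i, z⟩ ⟨i, y'⟩ = some (some ⟨i, x⟩) :=
            (tab'_ss_iff L).mpr ⟨x, hzy', rfl⟩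
          simp only [Option.elim]
          rw [ins_cons_ss L htab2]
          refine ins_head_none L (fun b'' hb'' => ?_)
          cases v with
          | nil => cases hb''
          | cons h' v' =>
            have hb : h' = b'' := by simpa using hb''
            cases hb
            exact (compat' L htab2 b'').mp (List.isChain_cons_cons.mp hu).1
      | some d =>
        obtain ⟨z', hd, rfl⟩ : ∃ z', (L i).g y * (L i).g y' = (L i).g z' ∧ d = ⟨i, z'⟩ :=
          (tab'_ss_iff L).mp hbb'
        rw [ins_cons_ss L hbb']
        cases o with
        | none =>
          have hxy : (L i).g x * (L i).g y = 1 := (tab'_sn_iff L).mp h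
          have hxz : (L i).g x * (L i).g z' = (L i).g y' := by
            rw [← hd, ← mul_assoc, hxy, one_mul]
          have htab2 : tab' L ⟨i, x⟩ ⟨i, z'⟩ = some (some ⟨i, y'⟩) :=
            (tab'_ss_iff L).mpr ⟨y', hxz, rfl⟩
          simp only [Option.elim]
          rw [ins_cons_ss L htab2]
        | some c =>
          obtain ⟨z, hz, rfl⟩ := (tab'_ss_iff L).mp h
          -- g x * g z' = g z * g y'
          have hxz : (L i).g x * (L i).g z' = (L i).g z * (L i).g y' := by
            rw [← hd, ← hz, mul_assoc]
          -- tab z y' cannot be none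
          have hne : (L i).tab z y' ≠ none := by
            intro hcon
            have := ((L i).compat x y z (((L i).t1 _ _ _).mpr hz) y').mpr hcon
            rw [((L i).t1 _ _ _).mpr hd] at this
            cases this
          simp only [Option.elim]
          cases hzy : (L i).tab z y' with
          | none => exact (hne hzy).elim
          | some o'' =>
            cases o'' with
            | none =>
              have h1 : (L i).g z * (L i).g y' = 1 := ((L i).t0 _ _).mp hzy
              have htA : tab' L ⟨i, x⟩ ⟨i, z'⟩ = some none :=
                (tab'_sn_iff L).mpr (hxz.trans h1)
              have htB : tab' L ⟨i, z⟩ ⟨i, y'⟩ = some none := (tab'_sn_iff L).mpr h1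
              rw [ins_cons_sn L htA, ins_cons_sn L htB]
            | some r =>
              have h1 : (L i).g z * (L i).g y' = (L i).g r := ((L i).t1 _ _ _).mp hzy
              have htA : tab' L ⟨i, x⟩ ⟨i, z'⟩ = some (some ⟨i, r⟩) :=
                (tab'_ss_iff L).mpr ⟨r, hxz.trans h1, rfl⟩
              have htB : tab' L ⟨i, z⟩ ⟨i, y'⟩ = some (some ⟨i, r⟩) :=
                (tab'_ss_iff L).mpr ⟨r, h1, rfl⟩
              rw [ins_cons_ss L htA, ins_cons_ss L htB]

lemma red_ins_word (a : Alph L) (u : List (Alph L)) :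
    RWReduces (Rules L) (FreeMonoid.ofList (a :: u)) (FreeMonoid.ofList (ins L a u)) := by
  cases u with
  | nil => exact Relation.ReflTransGen.refl
  | cons b v =>
    cases htab : tab' L a b with
    | none => rw [ins_cons_none L htab]; exact Relation.ReflTransGen.refl
    | some o =>
      refine Relation.ReflTransGen.single
        ⟨1, FreeMonoid.ofList v, FreeMonoid.of a * FreeMonoid.of b, rhsW L o,
          ⟨a, b, o, htab, rfl⟩, ?_, ?_⟩
      · simp [FreeMonoid.ofList_cons, mul_assoc]
      · cases o with
        | none => rw [ins_cons_sn L htab]; simp [rhsW]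
        | some c => rw [ins_cons_ss L htab]; simp [rhsW, FreeMonoid.ofList_cons, mul_assoc]

lemma rwstep_mul_left {α : Type*} {T : Set (FreeMonoid α × FreeMonoid α)}
    {u v w : FreeMonoid α} (h : RWStep T u v) : RWStep T (w * u) (w * v) := by
  obtain ⟨x, y, l, r, hT, rfl, rfl⟩ := h
  exact ⟨w * x, y, l, r, hT, by simp [mul_assoc], by simp [mul_assoc]⟩

lemma rwred_mul_left {α : Type*} {T : Set (FreeMonoid α × FreeMonoid α)}
    {u v : FreeMonoid α} (w : FreeMonoid α) (h : RWReduces T u v) :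
    RWReduces T (w * u) (w * v) := by
  induction h with
  | refl => exact Relation.ReflTransGen.refl
  | tail _ hstep ih => exact ih.tail (rwstep_mul_left hstep)

lemma red_nf (w : List (Alph L)) :
    RWReduces (Rules L) (FreeMonoid.ofList w) (FreeMonoid.ofList (nf L w)) := by
  induction w with
  | nil => exact Relation.ReflTransGen.refl
  | cons a w ih =>
    have h1 : RWReduces (Rules L) (FreeMonoid.ofList (a :: w))
        (FreeMonoid.ofList (a :: nf L w)) := by
      rw [FreeMonoid.ofList_cons, FreeMonoid.ofList_cons]
      exact rwred_mul_left _ ih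
    exact h1.trans (red_ins_word L a (nf L w))

lemma nf_rwstep {u v : FreeMonoid (Alph L)} (h : RWStep (Rules L) u v) :
    nf L u.toList = nf L v.toList := by
  obtain ⟨x, y, l, r, hT, rfl, rfl⟩ := h
  obtain ⟨a, b, o, htab, hpq⟩ := hT
  cases hpq
  have hrw : ∀ z : FreeMonoid (Alph L),
      (x * z * y).toList = x.toList ++ (z.toList ++ y.toList) := fun z => by
    simp [List.append_assoc]
  rw [hrw, hrw]
  unfold nf
  rw [List.foldr_append, List.foldr_append, List.foldr_append, List.foldr_append]
  congr 1
  have hkey := ins_ins L htab (irr_nf L y.toList)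
  cases o with
  | none => exact hkey
  | some c => exact hkey

lemma nf_rwreduces {u v : FreeMonoid (Alph L)} (h : RWReduces (Rules L) u v) :
    nf L u.toList = nf L v.toList := by
  induction h with
  | refl => rfl
  | tail _ hstep ih => exact ih.trans (nf_rwstep L hstep)

lemma rules_confluent : RWConfluent (Rules L) := by
  intro w x y hx hy
  refine ⟨FreeMonoid.ofList (nf L x.toList), ?_, ?_⟩
  · have := red_nf L x.toList
    rwa [FreeMonoid.ofList_toList] at this
  · have h2 : nf L x.toList = nf L y.toList :=
      (nf_rwreduces L hx).symm.trans (nf_rwreduces L hy)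
    rw [h2]
    have := red_nf L y.toList
    rwa [FreeMonoid.ofList_toList] at this

lemma terminating_of_lr {α : Type*} {T : Set (FreeMonoid α × FreeMonoid α)}
    (hlr : RWLengthReducing T) : RWTerminating T := by
  rintro ⟨f, hf⟩
  have hdec : ∀ n, (f (n + 1)).length < (f n).length := by
    intro n
    obtain ⟨x, y, l, r, hT, hu, hv⟩ := hf n
    have hlt := hlr _ hT
    dsimp only at hlt
    rw [hu, hv]
    simp only [FreeMonoid.length_mul]
    omega
  have hle : ∀ n, (f n).length + n ≤ (f 0).length := by
    intro n
    induction n with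
    | zero => simp
    | succ k ih => have := hdec k; omega
  have := hle ((f 0).length + 1)
  omega

lemma rules_lr : RWLengthReducing (Rules L) := by
  rintro p ⟨a, b, o, htab, rfl⟩
  cases o with
  | none => simp [rhsW]
  | some c => simp [rhsW]

lemma rules_lhs_len : ∀ p ∈ Rules L, (Prod.fst p).length = 2 := by
  rintro p ⟨a, b, o, htab, rfl⟩
  simp

/-! ### The presented monoid is the free product -/

def val (a : Alph L) : Monoid.CoprodI H := Monoid.CoprodI.of ((L a.1).g a.2)

def Fhom : FreeMonoid (Alph L) →* Monoid.CoprodI H := FreeMonoid.lift (val L)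

lemma F_rule {a b : Alph L} {o : Option (Alph L)} (h : tab' L a b = some o) :
    Fhom L (FreeMonoid.of a * FreeMonoid.of b) = Fhom L (rhsW L o) := by
  obtain ⟨i, x⟩ := a
  obtain ⟨j, y⟩ := b
  obtain rfl : i = j := tab'_comp L h
  cases o with
  | none =>
    have h1 := (tab'_sn_iff L).mp h
    simp only [Fhom, rhsW, val, map_mul, FreeMonoid.lift_eval_of, Option.elim, map_one]
    rw [← map_mul, h1, map_one]
  | some c =>
    obtain ⟨z, hz, rfl⟩ := (tab'_ss_iff L).mp h
    simp only [Fhom, rhsW, val, map_mul, FreeMonoid.lift_eval_of, Option.elim]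
    rw [← map_mul, hz]

def phi : RWMonoid (Rules L) →* Monoid.CoprodI H :=
  Con.lift _ (Fhom L) (by
    refine @id (RWCon (Rules L) ≤ Con.ker (Fhom L)) ?_
    apply Con.conGen_le.mpr
    rintro u v ⟨x, y, l, r, hT, rfl, rfl⟩
    obtain ⟨a, b, o, htab, hpq⟩ := hT
    cases hpq
    show Fhom L _ = Fhom L _
    simp only [map_mul, F_rule L htab])

lemma phi_class (a : Alph L) : phi L (RWclass (Rules L) (FreeMonoid.of a)) = val L a := by
  show Con.lift _ _ _ (Con.mk' _ _) = _
  rw [Con.lift_mk']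
  exact FreeMonoid.lift_eval_of _ _

lemma class_rule {a b : Alph L} {o : Option (Alph L)} (h : tab' L a b = some o) :
    RWclass (Rules L) (FreeMonoid.of a) * RWclass (Rules L) (FreeMonoid.of b)
      = RWclass (Rules L) (rhsW L o) := by
  show Con.mk' _ _ * Con.mk' _ _ = Con.mk' _ _
  rw [← map_mul]
  apply (Con.eq _).mpr
  exact ConGen.Rel.of _ _ ⟨1, 1, FreeMonoid.of a * FreeMonoid.of b, rhsW L o,
    ⟨a, b, o, h, rfl⟩, by rw [one_mul, mul_one], by rw [one_mul, mul_one]⟩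

lemma class_one : RWclass (Rules L) 1 = 1 := map_one (Con.mk' _)

lemma psifam_ex (i : ι) : ∃ φ : H i →* RWMonoid (Rules L),
    ∀ x, φ ((L i).g x) = RWclass (Rules L) (FreeMonoid.of ⟨i, x⟩) :=
  ((L i).lift (fun x => RWclass (Rules L) (FreeMonoid.of ⟨i, x⟩))
    (fun x y hxy => by
      have h := class_rule L ((tab'_sn_iff L).mpr (((L i).t0 x y).mp hxy))
      rw [h]; exact class_one L)
    (fun x y z hxyz => by
      have h := class_rule L
        ((tab'_ss_iff L).mpr ⟨z, ((L i).t1 x y z).mp hxyz, rfl⟩)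
      exact h)
    (fun x => by
      have ht : (L i).tab x ((L i).inv x) = some none :=
        ((L i).t0 _ _).mpr (by rw [(L i).hinv]; exact mul_inv_cancel _)
      have h := class_rule L ((tab'_sn_iff L).mpr (((L i).t0 _ _).mp ht))
      rw [h]; exact class_one L))

noncomputable def psifam (i : ι) : H i →* RWMonoid (Rules L) :=
  Classical.choose (psifam_ex L i)

lemma psifam_spec (i : ι) (x : Fin (L i).n) :
    psifam L i ((L i).g x) = RWclass (Rules L) (FreeMonoid.of ⟨i, x⟩) :=
  Classical.choose_spec (psifam_ex L i) x

noncomputable def psi : Monoid.CoprodI H →* RWMonoid (Rules L) :=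
  Monoid.CoprodI.lift (psifam L)

lemma psi_phi (q : RWMonoid (Rules L)) : psi L (phi L q) = q := by
  refine Con.induction_on q (fun w => ?_)
  refine FreeMonoid.recOn w ?_ ?_
  · show psi L (phi L (RWclass (Rules L) 1)) = RWclass (Rules L) 1
    rw [class_one, map_one, map_one]
  · intro a xs ih
    show psi L (phi L (RWclass (Rules L) (FreeMonoid.of a * xs)))
        = RWclass (Rules L) (FreeMonoid.of a * xs)
    have hmul : RWclass (Rules L) (FreeMonoid.of a * xs)
        = RWclass (Rules L) (FreeMonoid.of a) * RWclass (Rules L) xs := map_mul _ _ _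
    rw [hmul, map_mul, map_mul]
    have hletter : psi L (phi L (RWclass (Rules L) (FreeMonoid.of a)))
        = RWclass (Rules L) (FreeMonoid.of a) := by
      obtain ⟨i, x⟩ := a
      rw [phi_class]
      show psi L (Monoid.CoprodI.of ((L i).g x)) = _
      rw [psi, Monoid.CoprodI.lift_of, psifam_spec]
    rw [hletter]
    exact congrArg (fun z => RWclass (Rules L) (FreeMonoid.of a) * z) ih

lemma phi_psi : (phi L).comp (psi L) = MonoidHom.id (Monoid.CoprodI H) := by
  apply Monoid.CoprodI.ext_hom
  intro i
  ext m
  show phi L (psi L (Monoid.CoprodI.of m)) = Monoid.CoprodI.of m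
  have heq : Set.EqOn (⇑(((phi L).comp (psi L)).comp (Monoid.CoprodI.of : H i →* _)))
      (⇑((Monoid.CoprodI.of : H i →* _))) (Set.range (L i).g) := by
    rintro _ ⟨x, rfl⟩
    show phi L (psi L (Monoid.CoprodI.of ((L i).g x))) = Monoid.CoprodI.of ((L i).g x)
    rw [psi, Monoid.CoprodI.lift_of, psifam_spec, phi_class]
    rfl
  exact MonoidHom.eqOn_closureM heq ((L i).gen m)

end Global

theorem stmt9 (G : Type u) [Group G] (hG : IsPlainGroup G) :
    ∃ (A : Type) (_ : Fintype A) (T : Set (FreeMonoid A × FreeMonoid A)),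
      T.Finite ∧ RWTerminating T ∧ RWConfluent T ∧ RWLengthReducing T ∧
      (∀ p ∈ T, (Prod.fst p).length = 2) ∧
      ∃ e : RWMonoid T ≃* G,
        ∀ a : A, ∃ b : A,
          e (RWclass T (FreeMonoid.of b)) = (e (RWclass T (FreeMonoid.of a)))⁻¹ := by
  classical
  obtain ⟨ι, H, hH, hfinι, hcase, hiso⟩ := hG
  letI := hH
  haveI : Finite ι := hfinι
  haveI : DecidableEq ι := Classical.decEq ι
  obtain ⟨isoG⟩ := hiso
  set L : ∀ i, LocSys (H i) := fun i =>
    if h : Finite (H i) then @locFinite _ _ (@Fintype.ofFinite _ h) (Classical.decEq _)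
    else locZ _ (Classical.choice ((hcase i).resolve_left h)) with hL
  haveI : Fintype (Alph L) := Fintype.ofFinite _
  have hcomp1 : (psi L).comp (phi L) = MonoidHom.id (RWMonoid (Rules L)) :=
    MonoidHom.ext (fun q => psi_phi L q)
  set E : RWMonoid (Rules L) ≃* G :=
    (MonoidHom.toMulEquiv (phi L) (psi L) hcomp1 (phi_psi L)).trans isoG.symm with hE
  refine ⟨Alph L, inferInstance, Rules L, rules_finite L, terminating_of_lr (rules_lr L),
    rules_confluent L, rules_lr L, rules_lhs_len L, E, ?_⟩
  intro a
  refine ⟨⟨a.1, (L a.1).inv a.2⟩, ?_⟩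
  have hval : ∀ c : Alph L, E (RWclass (Rules L) (FreeMonoid.of c))
      = isoG.symm (Monoid.CoprodI.of ((L c.1).g c.2)) := by
    intro c
    rw [hE]
    show isoG.symm (phi L (RWclass (Rules L) (FreeMonoid.of c))) = _
    rw [phi_class]
    rfl
  rw [hval, hval, (L a.1).hinv, map_inv (Monoid.CoprodI.of : H a.1 →* _), map_inv]
end

section
/- If G is a plain group, i.e., a free product of finite groups G_1, ..., G_m and infinite cyclic groups C_1, ..., C_n, and Σ consists of all nontrivial elements of each G_i together with a generator and its inverse for each C_j, then every block of the undirected Cayley graph Γ(G, Σ) has diameter one (i.e., every block is a complete graph). -/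
/-- A set of vertices induces a two-connected subgraph: the induced subgraph is connected
and remains connected after removing any one vertex. -/
def IsTwoConnectedSet {V : Type*} (G : SimpleGraph V) (S : Set V) : Prop :=
  (G.induce S).Connected ∧ ∀ v ∈ S, (G.induce (S \ {v})).Connected

/-- A block is a maximal two-connected (induced) subgraph, given by its vertex set. -/
def IsBlock {V : Type*} (G : SimpleGraph V) (S : Set V) : Prop :=
  IsTwoConnectedSet G S ∧ ∀ S' : Set V, IsTwoConnectedSet G S' → S ⊆ S' → S' = S

/-- The undirected Cayley graph of a group `G` with respect to a set `S`:
distinct `g, h` are adjacent iff `g⁻¹ * h ∈ S ∪ S⁻¹`. -/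
def CayleyGraph (G : Type*) [Group G] (S : Set G) : SimpleGraph G where
  Adj g h := g ≠ h ∧ g⁻¹ * h ∈ S ∪ S⁻¹
  symm := by
    constructor
    rintro g h ⟨hne, hm⟩
    refine ⟨hne.symm, ?_⟩
    have h2 : (g⁻¹ * h)⁻¹ ∈ S ∪ S⁻¹ := by
      rcases hm with hm | hm
      · exact Or.inr (by simpa using hm)
      · exact Or.inl (by simpa using hm)
    simpa [mul_inv_rev] using h2
  loopless := ⟨fun g hg => hg.1 rfl⟩

/-! Let `u ≠ v` be non-adjacent and let `⟨i, a⟩` be the last letter of the normal form of `v⁻¹ * u`.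
Along a walk, `y⁻¹ * u` changes by left multiplication with a generator, which can change the last
letter only when `y⁻¹ * u` is a single letter. Choose `T ⊆ H i` with `a ∈ T`, `1 ∉ T` that can only
be entered at one generator `b`: `T = {a}` in a finite factor, where every nontrivial element is a
generator, and the elements of the same sign as `a` in an infinite cyclic factor, with
`b = gen i ^ (±1)`. Every walk from `u` to `v` then passes through `u * (of b)⁻¹`, a third vertex
separating `u` from `v`, which is impossible inside a two-connected set. -/

def SimpleGraph.Separates {V : Type*} (G : SimpleGraph V) (w u v : V) : Prop :=
  ∀ p : G.Walk u v, w ∈ p.support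

theorem SimpleGraph.separates_of_forall_adj {V : Type*} {G : SimpleGraph V} {Q : V → Prop}
    {w : V} (hQ : ∀ x y, G.Adj x y → ¬ Q x → Q y → y = w) {u v : V} (hu : ¬ Q u) (hv : Q v) :
    G.Separates w u v := by
  intro p
  obtain ⟨d, hd, hfst, hsnd⟩ := p.exists_boundary_dart {z | ¬ Q z} hu (not_not.mpr hv)
  rw [← hQ _ _ d.adj hfst (not_not.mp hsnd)]
  exact p.dart_snd_mem_support_of_mem_darts hd

namespace IsTwoConnectedSet

variable {V : Type*} {G : SimpleGraph V} {B : Set V}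

theorem not_separates (hB : IsTwoConnectedSet G B) {u v w : V} (hu : u ∈ B) (hv : v ∈ B)
    (hwu : w ≠ u) (hwv : w ≠ v) : ¬ G.Separates w u v := by
  have hconn : (G.induce (B \ {w})).Connected := by
    by_cases hw : w ∈ B
    · exact hB.2 w hw
    · rw [Set.sdiff_singleton_eq_self hw]
      exact hB.1
  obtain ⟨q⟩ := hconn.preconnected ⟨u, Set.mem_sdiff_singleton.mpr ⟨hu, hwu.symm⟩⟩
    ⟨v, Set.mem_sdiff_singleton.mpr ⟨hv, hwv.symm⟩⟩
  let f : G.induce (B \ {w}) →g G := ⟨Subtype.val, id⟩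
  intro hsep
  have hw := hsep (q.map f)
  rw [SimpleGraph.Walk.support_map, List.mem_map] at hw
  obtain ⟨z, -, hz⟩ := hw
  exact z.2.2 hz

theorem adj_of_forall_exists_separates (hB : IsTwoConnectedSet G B)
    (hsep : ∀ u v, u ≠ v → ¬ G.Adj u v → ∃ w, w ≠ u ∧ w ≠ v ∧ G.Separates w u v)
    {u v : V} (hu : u ∈ B) (hv : v ∈ B) (huv : u ≠ v) : G.Adj u v := by
  by_contra hna
  obtain ⟨w, hwu, hwv, hw⟩ := hsep u v huv hna
  exact hB.not_separates hu hv hwu hwv hw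

end IsTwoConnectedSet

theorem cayleyGraph_adj {G : Type*} [Group G] {S : Set G} {g h : G} :
    (CayleyGraph G S).Adj g h ↔ g ≠ h ∧ g⁻¹ * h ∈ S ∪ S⁻¹ :=
  Iff.rfl

theorem Set.inv_mem_union_inv {K : Type*} [Group K] {L : Set K} {b : K} (hb : b ∈ L ∪ L⁻¹) :
    b⁻¹ ∈ L ∪ L⁻¹ := by
  simpa [or_comm] using hb

section Gates

variable {K : Type*} [Group K]

/-- In the Cayley graph of `K` with edges `h — s * h` for `s ∈ D`, every edge entering `T`
ends at the neighbour `b` of `1`. -/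
def IsGate (D T : Set K) (b : K) : Prop :=
  b ∈ D ∧ b ∈ T ∧ ∀ s ∈ D, ∀ h ∉ T, s * h ∈ T → s * h = b

def AdmitsGates (D : Set K) : Prop :=
  ∀ a ≠ (1 : K), ∃ T b, a ∈ T ∧ (1 : K) ∉ T ∧ IsGate D T b

theorem admitsGates_of_forall_ne_one_mem {D : Set K} (hD : ∀ a ≠ (1 : K), a ∈ D) :
    AdmitsGates D :=
  fun a ha => ⟨{a}, a, rfl, Ne.symm ha, hD a ha, rfl, fun _ _ _ _ hsh => hsh⟩

theorem injective_zpow_of_zpowers_eq_top [Infinite K] {g : K} (hg : Subgroup.zpowers g = ⊤) :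
    Function.Injective (g ^ · : ℤ → K) :=
  fun m n h => Multiplicative.ofAdd.injective ((zpowersHom_bijective hg).1 (by simpa using h))

theorem isGate_image_zpow_Ioi [Infinite K] {g : K} (hg : Subgroup.zpowers g = ⊤) :
    IsGate {g, g⁻¹} ((fun n : ℤ => g ^ n) '' Set.Ioi 0) g := by
  have hinj := injective_zpow_of_zpowers_eq_top hg
  refine ⟨Or.inl rfl, ⟨1, Set.mem_Ioi.mpr one_pos, zpow_one g⟩, ?_⟩
  rintro s hs h hh ⟨n, hn, hsh⟩
  obtain ⟨k, rfl⟩ := Subgroup.mem_zpowers_iff.mp (hg ▸ Subgroup.mem_top h)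
  have hk : k ≤ 0 := not_lt.mp fun hk => hh ⟨k, hk, rfl⟩
  rw [Set.mem_Ioi] at hn
  rcases hs with rfl | rfl
  · have : n = 1 + k := hinj (by simpa [zpow_add] using hsh)
    rw [← hsh, show n = 1 by omega]
    exact zpow_one s
  · have : n = -1 + k := hinj (by simpa [zpow_add] using hsh)
    omega

theorem exists_gate_of_zpow_pos [Infinite K] {g : K} (hg : Subgroup.zpowers g = ⊤) {m : ℤ}
    (hm : 0 < m) : ∃ T b, g ^ m ∈ T ∧ (1 : K) ∉ T ∧ IsGate {g, g⁻¹} T b := by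
  refine ⟨(fun n : ℤ => g ^ n) '' Set.Ioi 0, g, ⟨m, hm, rfl⟩, ?_, isGate_image_zpow_Ioi hg⟩
  rintro ⟨n, hn, h⟩
  rw [injective_zpow_of_zpowers_eq_top hg (h.trans (zpow_zero g).symm)] at hn
  exact lt_irrefl 0 (Set.mem_Ioi.mp hn)

theorem admitsGates_pair_of_zpowers_eq_top [Infinite K] {g : K} (hg : Subgroup.zpowers g = ⊤) :
    AdmitsGates {g, g⁻¹} := by
  intro a ha
  obtain ⟨m, rfl⟩ := Subgroup.mem_zpowers_iff.mp (hg ▸ Subgroup.mem_top a)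
  rcases lt_or_gt_of_ne (show m ≠ 0 by rintro rfl; exact ha (zpow_zero g)) with hm | hm
  · have hg' : Subgroup.zpowers g⁻¹ = ⊤ := by rwa [Subgroup.zpowers_inv]
    have := exists_gate_of_zpow_pos hg' (neg_pos.mpr hm)
    rwa [inv_zpow', neg_neg, inv_inv, Set.pair_comm] at this
  · exact exists_gate_of_zpow_pos hg hm

end Gates

namespace Monoid.CoprodI

variable {ι : Type*} {H : ι → Type*} [∀ i, Group (H i)]

section LastLetter

variable [∀ i, DecidableEq (H i)]

theorem Word.getLast?_toList_rcons {i : ι} (p : Word.Pair H i) (hp : p.tail.toList ≠ []) :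
    (Word.rcons p).toList.getLast? = p.tail.toList.getLast? := by
  unfold Word.rcons
  split_ifs
  · rfl
  · rw [Word.cons_toList, List.getLast?_cons, List.getLast?_eq_some_getLast hp]
    rfl

variable [DecidableEq ι]

theorem Word.equiv_of {i : ι} {h : H i} (hh : h ≠ 1) :
    Word.equiv (of h) = Word.cons h Word.empty (by simp [Word.fstIdx]) hh := by
  refine (Equiv.eq_symm_apply _).mp ?_
  show of h = Word.prod _
  simp

theorem Word.equiv_of_mul {i : ι} (s : H i) {x : CoprodI H} {p : Word.Pair H i}
    (hp : Word.rcons p = Word.equiv x) :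
    Word.equiv (of s * x) = Word.rcons ⟨s * p.head, p.tail, p.fstIdx_ne⟩ := by
  obtain rfl : p = Word.equivPair i (Word.equiv x) := by
    rw [← hp, ← Word.equivPair_symm, Equiv.apply_symm_apply]
  show (of s * x) • (Word.empty : Word H) = _
  rw [mul_smul, Word.of_smul_def]
  rfl

def lastLetter (x : CoprodI H) : Option (Σ i, H i) :=
  (Word.equiv x).toList.getLast?

theorem lastLetter_one : lastLetter (1 : CoprodI H) = none := by
  simp [lastLetter, Word.equiv]

theorem lastLetter_of {i : ι} {h : H i} (hh : h ≠ 1) : lastLetter (of h) = some ⟨i, h⟩ := by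
  simp [lastLetter, Word.equiv_of hh]

theorem exists_lastLetter {x : CoprodI H} (hx : x ≠ 1) :
    ∃ i, ∃ a : H i, a ≠ 1 ∧ lastLetter x = some ⟨i, a⟩ := by
  have hne : (Word.equiv x).toList ≠ [] := fun h =>
    hx (Word.equiv.injective ((Word.ext (y := Word.empty) h).trans (by simp [Word.equiv])))
  exact ⟨_, _, (Word.equiv x).ne_one _ (List.getLast_mem hne), List.getLast?_eq_some_getLast hne⟩

theorem lastLetter_of_mul {i : ι} (s : H i) (x : CoprodI H) :
    lastLetter (of s * x) = lastLetter x ∨ ∃ h : H i, x = of h := by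
  obtain ⟨p, hx⟩ : ∃ p : Word.Pair H i, Word.rcons p = Word.equiv x :=
    ⟨_, (Word.equivPair i).symm_apply_apply _⟩
  by_cases ht : p.tail.toList = []
  · right
    refine ⟨p.head, ?_⟩
    rw [← Word.equiv.symm_apply_apply x, ← hx]
    show Word.prod _ = _
    rw [Word.prod_rcons]
    simp [Word.prod, ht]
  · left
    rw [lastLetter, lastLetter, Word.equiv_of_mul s hx, ← hx,
      Word.getLast?_toList_rcons ⟨s * p.head, p.tail, p.fstIdx_ne⟩ ht,
      Word.getLast?_toList_rcons p ht]

def LastLetterMem {i : ι} (T : Set (H i)) (x : CoprodI H) : Prop :=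
  ∃ c ∈ T, lastLetter x = some ⟨i, c⟩

theorem of_mul_eq_of_of_not_lastLetterMem {i : ι} {D : ∀ j, Set (H j)} {T : Set (H i)} {b : H i}
    (hT : 1 ∉ T) (hentry : ∀ s ∈ D i, ∀ h ∉ T, s * h ∈ T → s * h = b) {j : ι} {s : H j} (hs : s ∈ D j) {x : CoprodI H}
    (hx : ¬ LastLetterMem T x) (hsx : LastLetterMem T (of s * x)) : of s * x = of b := by
  obtain ⟨c, hcT, hc⟩ := hsx
  rcases lastLetter_of_mul s x with hlast | ⟨h, rfl⟩
  · exact absurd ⟨c, hcT, hlast ▸ hc⟩ hx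
  rw [← map_mul] at hc ⊢
  have hsh : s * h ≠ 1 := by
    rintro hsh
    rw [hsh, map_one, lastLetter_one] at hc
    cases hc
  rw [lastLetter_of hsh, Option.some.injEq, Sigma.mk.inj_iff] at hc
  obtain ⟨rfl, hc⟩ := hc
  rw [heq_iff_eq] at hc
  have hh : h ∉ T := fun hhT => hx ⟨h, hhT, lastLetter_of (fun h1 => hT (h1 ▸ hhT))⟩
  rw [hentry s hs h hh (hc ▸ hcT)]

end LastLetter

def letterSet (L : ∀ i, Set (H i)) : Set (CoprodI H) :=
  {x | ∃ (i : ι) (h : H i), x = of h ∧ h ∈ L i}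

theorem letterSet_union_inv (L : ∀ i, Set (H i)) :
    letterSet L ∪ (letterSet L)⁻¹ = letterSet fun i => L i ∪ (L i)⁻¹ := by
  ext x
  simp only [letterSet, Set.mem_union, Set.mem_inv, Set.mem_ofPred_eq]
  constructor
  · rintro (⟨i, h, rfl, hh⟩ | ⟨i, h, hx, hh⟩)
    · exact ⟨i, h, rfl, Or.inl hh⟩
    · exact ⟨i, h⁻¹, by rw [map_inv, ← hx, inv_inv], Or.inr (by rwa [inv_inv])⟩
  · rintro ⟨i, h, rfl, hh | hh⟩
    · exact Or.inl ⟨i, h, rfl, hh⟩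
    · exact Or.inr ⟨i, h⁻¹, by rw [map_inv], hh⟩

theorem exists_separates_of_not_adj {L : ∀ i, Set (H i)}
    (hL : ∀ i, AdmitsGates (L i ∪ (L i)⁻¹)) {u v : CoprodI H} (huv : u ≠ v)
    (hna : ¬ (CayleyGraph (CoprodI H) (letterSet L)).Adj u v) :
    ∃ w, w ≠ u ∧ w ≠ v ∧ (CayleyGraph (CoprodI H) (letterSet L)).Separates w u v := by
  classical
  obtain ⟨i, a, ha, hla⟩ := exists_lastLetter (x := v⁻¹ * u) (inv_mul_eq_one.not.mpr huv.symm)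
  obtain ⟨T, b, haT, hT, hbD, hbT, hentry⟩ := hL i a ha
  refine ⟨u * (of b)⁻¹, ?_, ?_, SimpleGraph.separates_of_forall_adj
    (Q := fun y => LastLetterMem T (y⁻¹ * u)) ?_ ?_ ⟨a, haT, hla⟩⟩
  · rw [Ne, mul_eq_left, inv_eq_one, map_eq_one_iff _ (of_injective i)]
    exact fun hb => hT (hb ▸ hbT)
  · intro hv
    refine hna (cayleyGraph_adj.mpr ⟨huv, ?_⟩)
    rw [← hv, inv_mul_cancel_left, ← map_inv, letterSet_union_inv]
    exact ⟨i, b⁻¹, rfl, Set.inv_mem_union_inv hbD⟩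
  · rintro x y ⟨-, hxy⟩ hx hy
    rw [letterSet_union_inv] at hxy
    obtain ⟨j, t, ht, htL⟩ := hxy
    have hstep : y⁻¹ * u = of t⁻¹ * (x⁻¹ * u) := by
      rw [map_inv, ← ht]
      group
    have hyb := of_mul_eq_of_of_not_lastLetterMem (D := fun j => L j ∪ (L j)⁻¹) hT hentry
      (Set.inv_mem_union_inv htL) hx (hstep ▸ hy)
    rw [← hyb, ← hstep]
    group
  · rintro ⟨c, -, hc⟩
    rw [inv_mul_cancel, lastLetter_one] at hc
    cases hc

end Monoid.CoprodI

section PlainGroup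

variable {ι : Type*} {H : ι → Type*} [∀ i, Group (H i)]

def plainLetters (P : ι → Prop) (gen : ∀ i, H i) (i : ι) : Set (H i) :=
  {h | (P i ∧ h ≠ 1) ∨ (¬ P i ∧ (h = gen i ∨ h = (gen i)⁻¹))}

theorem admitsGates_plainLetters {P : ι → Prop} {gen : ∀ i, H i}
    (hcyc : ∀ i, ¬ P i → Nonempty (H i ≃* Multiplicative ℤ) ∧
      ∀ x : H i, x ∈ Subgroup.zpowers (gen i)) (i : ι) :
    AdmitsGates (plainLetters P gen i ∪ (plainLetters P gen i)⁻¹) := by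
  by_cases hP : P i
  · exact admitsGates_of_forall_ne_one_mem fun a ha => Or.inl (Or.inl ⟨hP, ha⟩)
  obtain ⟨⟨e⟩, hgen⟩ := hcyc i hP
  have : Infinite (H i) := Infinite.of_injective e.symm e.symm.injective
  have hletters : plainLetters P gen i ∪ (plainLetters P gen i)⁻¹ = {gen i, (gen i)⁻¹} := by
    ext h
    simp [plainLetters, hP, inv_eq_iff_eq_inv, or_comm]
  rw [hletters]
  exact admitsGates_pair_of_zpowers_eq_top ((Subgroup.eq_top_iff' _).mpr hgen)

end PlainGroup

theorem stmt14_general {ι : Type} (H : ι → Type) [∀ i, Group (H i)]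
    (P : ι → Prop) (gen : ∀ i, H i)
    (hcyc : ∀ i, ¬ P i → Nonempty (H i ≃* Multiplicative ℤ) ∧
      ∀ x : H i, x ∈ Subgroup.zpowers (gen i)) :
    ∀ B : Set (Monoid.CoprodI H),
      IsBlock (CayleyGraph (Monoid.CoprodI H)
        {x : Monoid.CoprodI H | ∃ (i : ι) (h : H i), x = Monoid.CoprodI.of h ∧
          ((P i ∧ h ≠ 1) ∨ (¬ P i ∧ (h = gen i ∨ h = (gen i)⁻¹)))}) B →
      ∀ u ∈ B, ∀ v ∈ B, u ≠ v →
        (CayleyGraph (Monoid.CoprodI H)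
          {x : Monoid.CoprodI H | ∃ (i : ι) (h : H i), x = Monoid.CoprodI.of h ∧
            ((P i ∧ h ≠ 1) ∨ (¬ P i ∧ (h = gen i ∨ h = (gen i)⁻¹)))}).Adj u v := by
  intro B hB u hu v hv huv
  exact IsTwoConnectedSet.adj_of_forall_exists_separates hB.1
    (fun _ _ => Monoid.CoprodI.exists_separates_of_not_adj (L := plainLetters P gen)
      (admitsGates_plainLetters hcyc))
    hu hv huv

theorem stmt14 {ι : Type} [Fintype ι] (H : ι → Type) [∀ i, Group (H i)]
    (P : ι → Prop) (gen : ∀ i, H i)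
    (hfin : ∀ i, P i → Finite (H i))
    (hcyc : ∀ i, ¬ P i → Nonempty (H i ≃* Multiplicative ℤ) ∧
      ∀ x : H i, x ∈ Subgroup.zpowers (gen i)) :
    ∀ B : Set (Monoid.CoprodI H),
      IsBlock (CayleyGraph (Monoid.CoprodI H)
        {x : Monoid.CoprodI H | ∃ (i : ι) (h : H i), x = Monoid.CoprodI.of h ∧
          ((P i ∧ h ≠ 1) ∨ (¬ P i ∧ (h = gen i ∨ h = (gen i)⁻¹)))}) B →
      ∀ u ∈ B, ∀ v ∈ B, u ≠ v →
        (CayleyGraph (Monoid.CoprodI H)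
          {x : Monoid.CoprodI H | ∃ (i : ι) (h : H i), x = Monoid.CoprodI.of h ∧
            ((P i ∧ h ≠ 1) ∨ (¬ P i ∧ (h = gen i ∨ h = (gen i)⁻¹)))}).Adj u v :=
  stmt14_general H P gen hcyc
end

section
/- In a geodetic graph, the unique geodesic joining any two vertices of an isometrically embedded circuit is a subpath of that circuit. -/
private lemma walk_along {V : Type*} (G : SimpleGraph V) :
    ∀ (m : ℕ) (f : ℕ → V), (∀ k, k < m → G.Adj (f k) (f (k + 1))) →
    ∃ w : G.Walk (f 0) (f m), w.length = m ∧ ∀ k ≤ m, w.getVert k = f k := by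
  intro m
  induction m with
  | zero =>
    intro f _
    exact ⟨.nil, rfl, by intro k hk; simp [Nat.le_zero.mp hk]⟩
  | succ m ih =>
    intro f h
    obtain ⟨w, hl, hg⟩ := ih (fun k => f (k + 1)) (fun k hk => h (k + 1) (by omega))
    refine ⟨.cons (h 0 (by omega)) w, by simp [hl], ?_⟩
    intro k hk
    cases k with
    | zero => simp
    | succ k => simpa using hg k (by omega)

theorem stmt19 {V : Type*} (G : SimpleGraph V) (hG : IsGeodetic G)
    (n : ℕ) (c : ZMod n → V) (hc : IsIEC G n c) (i j : ZMod n)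
    (p : G.Walk (c i) (c j)) (hmin : ∀ q : G.Walk (c i) (c j), p.length ≤ q.length) :
    (∀ k : ℕ, k ≤ p.length → p.getVert k = c (i + (k : ZMod n))) ∨
    (∀ k : ℕ, k ≤ p.length → p.getVert k = c (i - (k : ZMod n))) := by
  obtain ⟨⟨hn2, hinj, hadj⟩, hdist⟩ := hc
  haveI : NeZero n := ⟨by omega⟩
  have key : ∀ (d : ZMod n) (m : ℕ), (∀ x, G.Adj (c x) (c (x + d))) →
      i + (m : ZMod n) * d = j → m = G.dist (c i) (c j) →
      ∀ k : ℕ, k ≤ p.length → p.getVert k = c (i + (k : ZMod n) * d) := by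
    intro d m hAdj hend hm
    obtain ⟨w, hl, hg⟩ := walk_along G m (fun k => c (i + (k : ZMod n) * d))
      (fun k _ => by
        have h1 : i + ((k + 1 : ℕ) : ZMod n) * d = i + (k : ZMod n) * d + d := by
          push_cast; ring
        simp only [h1]
        exact hAdj (i + (k : ZMod n) * d))
    have e1 : c (i + ((0 : ℕ) : ZMod n) * d) = c i := by norm_num
    have e2 : c (i + ((m : ℕ) : ZMod n) * d) = c j := by rw [hend]
    set w' : G.Walk (c i) (c j) := w.copy e1 e2 with hw'
    have hw'len : w'.length = m := by rw [hw', SimpleGraph.Walk.length_copy, hl]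
    have hw'min : ∀ r : G.Walk (c i) (c j), w'.length ≤ r.length := by
      intro r
      rw [hw'len, hm]
      exact SimpleGraph.dist_le r
    obtain ⟨q, hq, huniq⟩ := hG (c i) (c j)
    have hp : p = w' := (huniq p hmin).trans (huniq w' hw'min).symm
    intro k hk
    have hk' : k ≤ m := by rw [← hw'len, ← hp]; exact hk
    rw [hp, hw', SimpleGraph.Walk.getVert_copy]
    exact hg k hk'
  rcases le_total (j - i).val (i - j).val with h | h
  · left
    intro k hk
    have := key 1 (j - i).val hadj
      (by rw [ZMod.natCast_val, ZMod.cast_id, mul_one]; ring)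
      (by rw [hdist i j, min_eq_left h]) k hk
    simpa using this
  · right
    intro k hk
    have hAdj' : ∀ x : ZMod n, G.Adj (c x) (c (x + (-1))) := by
      intro x
      have h2 : x + (-1) = x - 1 := by ring
      rw [h2]
      have := (hadj (x - 1)).symm
      have h3 : x - 1 + 1 = x := by ring
      rwa [h3] at this
    have := key (-1) (i - j).val hAdj'
      (by rw [ZMod.natCast_val, ZMod.cast_id]; ring)
      (by rw [hdist i j, min_eq_right h]) k hk
    rw [this]
    ring_nf
end
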